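/- arXiv:2101.10924 — 8 statements merged into one kernel-verified Lean document; each statement's English description precedes it below -/
import Mathlib

section
/- Define polynomials c_{p,j}(r) ∈ ℚ[r] for 0 ≤ p ≤ j by the generating function (1/p!)·(((1+x)^{r+1} − 1 − (r+1)x)/((r+1)x))^p = Σ_{j≥p} c_{p,j}(r) x^j. Then these polynomials satisfy the recursion (p+j)·c_{p,j}(r) = (rp − j + 1)·c_{p,j-1}(r) + r·c_{p-1,j-1}(r), where c_{p,j} := 0 if p > j or p < 0. -/
/-- The binomial series `(1+x)^(r+1) = ∑_k binom(r+1,k) x^k`, where `r` is a polynomial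
variable: the coefficient of `x^k` is the polynomial `binom(r+1,k) ∈ ℚ[r]`. -/
noncomputable def binSeries : PowerSeries (Polynomial ℚ) :=
  PowerSeries.mk fun k =>
    ((k.factorial : ℚ))⁻¹ • ((descPochhammer ℚ k).comp (Polynomial.X + 1))

/-- Given the power series `G = ((1+x)^{r+1} - 1 - (r+1)x)/((r+1)x)`, the coefficient
`c_{p,j}(r)` is the coefficient of `x^j` in `(1/p!) G^p`; by convention it is `0`
for negative indices. -/
noncomputable def cpj (G : PowerSeries (Polynomial ℚ)) (p j : ℤ) : Polynomial ℚ :=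
  if 0 ≤ p ∧ 0 ≤ j then
    ((p.toNat.factorial : ℚ))⁻¹ • (PowerSeries.coeff (R := Polynomial ℚ) j.toNat (G ^ p.toNat))
  else 0

/-! The series `G` satisfies the linear differential equation
`(1 + x)(x G)' = (r + 1) x G + r x`, obtained by differentiating `(r + 1) x G = B - 1 - (r + 1) x`
and using `(1 + x) B' = (r + 1) B` for the binomial series `B = (1 + x)^(r + 1)`.
The divided powers `D_p = G^p / p!` satisfy `p D_p = D_{p-1} G` and `D_p' = D_{p-1} G'`, so
multiplying that equation by `D_{p-1}` gives
`(1 + x)(p D_p + x D_p') = (r + 1) p x D_p + r x D_{p-1}`.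
Comparing coefficients of `x^j` on both sides is the recursion. Setting `D_p = 0` for `p < 0` and
reading coefficients of negative index as `0`, all of this holds for every `p, j ∈ ℤ`, so the
boundary cases need no separate treatment. -/

open PowerSeries

section CoeffInt

variable {R : Type*} [CommRing R]

noncomputable def coeffInt (j : ℤ) : R⟦X⟧ →ₗ[R] R :=
  if 0 ≤ j then coeff j.toNat else 0

lemma coeffInt_natCast (n : ℕ) (F : R⟦X⟧) : coeffInt n F = coeff n F := by
  simp [coeffInt]

lemma coeffInt_of_neg {j : ℤ} (hj : j < 0) (F : R⟦X⟧) : coeffInt j F = 0 := by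
  simp [coeffInt, not_le.2 hj]

lemma coeffInt_C_mul (j : ℤ) (a : R) (F : R⟦X⟧) : coeffInt j (C a * F) = a * coeffInt j F := by
  rw [← smul_eq_C_mul, map_smul, smul_eq_mul]

lemma coeffInt_X_mul (j : ℤ) (F : R⟦X⟧) : coeffInt j (X * F) = coeffInt (j - 1) F := by
  rcases lt_trichotomy j 0 with hj | rfl | hj
  · rw [coeffInt_of_neg hj, coeffInt_of_neg (by omega)]
  · rw [coeffInt_of_neg (j := 0 - 1) (by norm_num)]
    simp [coeffInt]
  · lift j - 1 to ℕ using (by omega) with n hn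
    rw [show j = (n + 1 : ℕ) by omega, coeffInt_natCast, coeffInt_natCast, coeff_succ_X_mul]

lemma coeffInt_sub_one_derivative (j : ℤ) (F : R⟦X⟧) :
    coeffInt (j - 1) (d⁄dX R F) = j * coeffInt j F := by
  rcases lt_trichotomy j 0 with hj | rfl | hj
  · rw [coeffInt_of_neg hj, coeffInt_of_neg (by omega), mul_zero]
  · rw [Int.cast_zero, zero_mul, coeffInt_of_neg (by norm_num)]
  · lift j - 1 to ℕ using (by omega) with n hn
    rw [show j = (n + 1 : ℕ) by omega, coeffInt_natCast, coeffInt_natCast, coeff_derivative]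
    push_cast
    ring

end CoeffInt

section DividedPow

variable {R : Type*} [CommRing R] [Algebra ℚ R]

noncomputable def dividedPow (G : R⟦X⟧) (p : ℤ) : R⟦X⟧ :=
  if 0 ≤ p then (p.toNat.factorial : ℚ)⁻¹ • G ^ p.toNat else 0

lemma dividedPow_natCast (G : R⟦X⟧) (n : ℕ) :
    dividedPow G n = (n.factorial : ℚ)⁻¹ • G ^ n := by
  simp [dividedPow]

lemma dividedPow_zero (G : R⟦X⟧) : dividedPow G 0 = 1 := by
  simp [dividedPow]

lemma dividedPow_of_neg (G : R⟦X⟧) {p : ℤ} (hp : p < 0) : dividedPow G p = 0 := by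
  simp [dividedPow, not_le.2 hp]

lemma inv_factorial_succ_mul (n : ℕ) :
    ((n + 1).factorial : ℚ)⁻¹ * (n + 1 : ℕ) = (n.factorial : ℚ)⁻¹ := by
  rw [Nat.factorial_succ]
  push_cast
  field_simp

lemma C_intCast_mul_dividedPow (G : R⟦X⟧) (p : ℤ) :
    C (p : R) * dividedPow G p = dividedPow G (p - 1) * G := by
  rcases lt_trichotomy p 0 with hp | rfl | hp
  · rw [dividedPow_of_neg G hp, dividedPow_of_neg G (by omega), mul_zero, zero_mul]
  · rw [Int.cast_zero, map_zero, zero_mul, dividedPow_of_neg G (by norm_num), zero_mul]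
  · lift p - 1 to ℕ using (by omega) with n hn
    rw [show p = (n + 1 : ℕ) by omega, dividedPow_natCast, dividedPow_natCast, smul_mul_assoc,
      ← pow_succ, ← smul_eq_C_mul, smul_comm, Int.cast_natCast, Nat.cast_smul_eq_nsmul, ← Nat.cast_smul_eq_nsmul ℚ, smul_smul,
      inv_factorial_succ_mul]

lemma derivative_dividedPow (G : R⟦X⟧) (p : ℤ) :
    d⁄dX R (dividedPow G p) = dividedPow G (p - 1) * d⁄dX R G := by
  rcases lt_trichotomy p 0 with hp | rfl | hp
  · rw [dividedPow_of_neg G hp, dividedPow_of_neg G (by omega), map_zero, zero_mul]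
  · rw [dividedPow_of_neg G (p := 0 - 1) (by norm_num), zero_mul, dividedPow_zero, derivative_one]
  · lift p - 1 to ℕ using (by omega) with n hn
    rw [show p = (n + 1 : ℕ) by omega, dividedPow_natCast, dividedPow_natCast, smul_mul_assoc,
      Derivation.map_smul_of_tower, derivative_pow, Nat.add_sub_cancel, mul_assoc, ← nsmul_eq_mul, ← Nat.cast_smul_eq_nsmul ℚ, smul_smul,
      inv_factorial_succ_mul]

lemma dividedPow_ode {G : R⟦X⟧} {a b : R}
    (hG : (1 + X) * (G + X * d⁄dX R G) = C a * X * G + C b * X) (p : ℤ) :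
    (1 + X) * (C (p : R) * dividedPow G p + X * d⁄dX R (dividedPow G p))
      = C (a * p) * X * dividedPow G p + C b * X * dividedPow G (p - 1) := by
  rw [map_mul, derivative_dividedPow]
  linear_combination dividedPow G (p - 1) * hG
    + (1 + X - C a * X) * C_intCast_mul_dividedPow G p

end DividedPow

lemma ode_of_C_mul_X_mul_eq {R : Type*} [CommRing R] [IsDomain R] {a : R} (ha : a ≠ 0)
    {B G : R⟦X⟧} (hB : (1 + X) * d⁄dX R B = C a * B) (hG : C a * X * G = B - 1 - C a * X) :
    (1 + X) * (G + X * d⁄dX R G) = C a * X * G + C (a - 1) * X := by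
  have hG' := congrArg (d⁄dX R) hG
  simp only [Derivation.leibniz, derivative_C, derivative_X, map_sub, derivative_one,
    smul_eq_mul, mul_one, mul_zero, add_zero, sub_zero] at hG'
  refine mul_left_cancel₀ ((map_ne_zero_iff _ C_injective).2 ha) ?_
  rw [map_sub, map_one]
  linear_combination (1 + X) * hG' + hB - C a * hG

lemma coeff_binSeries_succ (k : ℕ) :
    ((k : Polynomial ℚ) + 1) * coeff (k + 1) binSeries
      = (Polynomial.X + 1 - (k : Polynomial ℚ)) * coeff k binSeries := by
  simp only [binSeries, coeff_mk, descPochhammer_succ_right, Polynomial.mul_comp,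
    Polynomial.sub_comp, Polynomial.X_comp, Polynomial.natCast_comp, Polynomial.smul_eq_C_mul]
  have h := congrArg Polynomial.C (inv_factorial_succ_mul k)
  rw [map_mul, map_natCast] at h
  push_cast at h
  linear_combination
    (Polynomial.X + 1 - (k : Polynomial ℚ)) * (descPochhammer ℚ k).comp (Polynomial.X + 1) * h

lemma binSeries_ode :
    (1 + X) * d⁄dX (Polynomial ℚ) binSeries = C (Polynomial.X + 1) * binSeries := by
  ext k : 1
  have h := coeff_binSeries_succ k
  rw [add_mul, one_mul, map_add, coeff_C_mul]
  cases k with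
  | zero =>
    rw [coeff_zero_X_mul, coeff_derivative]
    push_cast at h ⊢
    linear_combination h
  | succ k =>
    rw [coeff_succ_X_mul, coeff_derivative, coeff_derivative]
    push_cast at h ⊢
    linear_combination h

lemma cpj_eq_coeffInt_dividedPow (G : PowerSeries (Polynomial ℚ)) (p j : ℤ) :
    cpj G p j = coeffInt j (dividedPow G p) := by
  unfold cpj coeffInt dividedPow
  by_cases hp : 0 ≤ p <;> by_cases hj : 0 ≤ j <;> simp [hp, hj]

/-- The polynomials `c_{p,j}(r)` satisfy
`(p+j)·c_{p,j}(r) = (rp − j + 1)·c_{p,j-1}(r) + r·c_{p-1,j-1}(r)`,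
with `c_{p,j} = 0` for negative indices (and automatically for `p > j`). -/
theorem stmt0 (G : PowerSeries (Polynomial ℚ))
    (hG : PowerSeries.C (R := Polynomial ℚ) (Polynomial.X + 1) * PowerSeries.X * G
        = binSeries - 1 - PowerSeries.C (R := Polynomial ℚ) (Polynomial.X + 1) * PowerSeries.X) :
    ∀ p j : ℤ,
      ((p : Polynomial ℚ) + (j : Polynomial ℚ)) * cpj G p j
        = (Polynomial.X * (p : Polynomial ℚ) - (j : Polynomial ℚ) + 1) * cpj G p (j - 1)
          + Polynomial.X * cpj G (p - 1) (j - 1) := by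
  have hode := dividedPow_ode
    (ode_of_C_mul_X_mul_eq (Polynomial.X_add_C_ne_zero 1) binSeries_ode hG)
  intro p j
  have h := congrArg (coeffInt j) (hode p)
  simp only [add_sub_cancel_right, add_mul, one_mul, map_add, mul_assoc, coeffInt_X_mul,
    coeffInt_C_mul, coeffInt_sub_one_derivative] at h
  push_cast at h
  rw [cpj_eq_coeffInt_dividedPow, cpj_eq_coeffInt_dividedPow, cpj_eq_coeffInt_dividedPow]
  linear_combination h
end

section
/- With X(u) and C̃_n(r,i,j) as defined by ((X+1)^{r+1} − (X−1)^{r+1})/(2(r+1)) = 1/u^r and −(X+1)^i(X−1)^j dX/du = Σ_{n≥0} C̃_n(r,i,j) u^{n−i−j−2}, one has C̃_n(r, i+r+1, j) − C̃_n(r, i, j+r+1) = 2(r+1)·C̃_{n-1}(r,i,j) for all n ≥ 1. -/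
/-! Multiplying `-(X+1)^i (X-1)^j dX/du` by the defining equation
`(X+1)^{r+1} - (X-1)^{r+1} = 2(r+1) u^{-r}` gives the difference of the two series on the left,
and multiplication by `u^{-r}` only shifts coefficients. -/

/-- `Ct X D i j n` is the coefficient `C̃_n(r,i,j)`: the coefficient of `u^(n-i-j-2)` in
`-(X+1)^i (X-1)^j (dX/du)`, where `D = dX/du`. -/
noncomputable def Ct (X D : LaurentSeries ℚ) (i j n : ℕ) : ℚ :=
  -(((X + 1) ^ i * (X - 1) ^ j * D).coeff ((n : ℤ) - (i : ℤ) - (j : ℤ) - 2))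

theorem Ct_sub_Ct_of_sub_eq_single {X D : LaurentSeries ℚ} {r : ℕ} {c : ℚ}
    (hX : (X + 1) ^ (r + 1) - (X - 1) ^ (r + 1) = HahnSeries.single (-(r : ℤ)) c)
    (i j n : ℕ) :
    Ct X D (i + r + 1) j (n + 1) - Ct X D i (j + r + 1) (n + 1) = c * Ct X D i j n := by
  have key : (X + 1) ^ (i + r + 1) * (X - 1) ^ j * D - (X + 1) ^ i * (X - 1) ^ (j + r + 1) * D
      = HahnSeries.single (-(r : ℤ)) c * ((X + 1) ^ i * (X - 1) ^ j * D) := by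
    rw [← hX]; ring
  have hleft : ((n + 1 : ℕ) : ℤ) - ((i + r + 1 : ℕ) : ℤ) - j - 2 = ((n : ℤ) - i - j - 2) + -r := by
    push_cast; ring
  have hright : ((n + 1 : ℕ) : ℤ) - i - ((j + r + 1 : ℕ) : ℤ) - 2 = ((n : ℤ) - i - j - 2) + -r := by
    push_cast; ring
  simp only [Ct, hleft, hright]
  rw [neg_sub_neg, ← HahnSeries.coeff_sub, ← neg_sub, HahnSeries.coeff_neg, key,
    HahnSeries.coeff_single_mul_add]
  ring

theorem stmt2_general (r : ℕ) (X D : LaurentSeries ℚ)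
    (hX : (X + 1) ^ (r + 1) - (X - 1) ^ (r + 1)
        = HahnSeries.single (-(r : ℤ)) ((2 : ℚ) * r + 2)) :
    ∀ i j n : ℕ, 1 ≤ n →
      Ct X D (i + r + 1) j n - Ct X D i (j + r + 1) n = (2 * (r : ℚ) + 2) * Ct X D i j (n - 1) := by
  intro i j n hn
  obtain ⟨m, rfl⟩ : ∃ m, n = m + 1 := ⟨n - 1, by omega⟩
  exact Ct_sub_Ct_of_sub_eq_single hX i j m

/-- Let `r` be a positive integer and `X = X(u)` the unique odd Laurent series
`X = 1/u - ((r-1)/6)u + ⋯` satisfying `((X+1)^{r+1} - (X-1)^{r+1})/(2(r+1)) = 1/u^r`,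
and let `D = dX/du`.  Then the coefficients `C̃_n(r,i,j)` of
`-(X+1)^i (X-1)^j dX/du = Σ_{n≥0} C̃_n(r,i,j) u^{n-i-j-2}` satisfy
`C̃_n(r,i+r+1,j) - C̃_n(r,i,j+r+1) = 2(r+1)·C̃_{n-1}(r,i,j)` for all `n ≥ 1`. -/
theorem stmt2 (r : ℕ) (hr : 0 < r) (X D : LaurentSeries ℚ)
    (hodd : ∀ n : ℤ, Even n → X.coeff n = 0)
    (hlead : X.coeff (-1) = 1)
    (hlow : ∀ n : ℤ, n < -1 → X.coeff n = 0)
    (hX : (X + 1) ^ (r + 1) - (X - 1) ^ (r + 1)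
        = HahnSeries.single (-(r : ℤ)) ((2 : ℚ) * r + 2))
    (hD : ∀ n : ℤ, D.coeff n = ((n : ℚ) + 1) * X.coeff (n + 1)) :
    ∀ i j n : ℕ, 1 ≤ n →
      Ct X D (i + r + 1) j n - Ct X D i (j + r + 1) n = (2 * (r : ℚ) + 2) * Ct X D i j (n - 1) :=
  stmt2_general r X D hX
end

section
/- Let r be a formal variable and let w = w(u) = 1 + u − ((r−1)/6)u² + ⋯ be the unique power series solution in 1 + u + u²ℚ[r][[u]] of w^{r+1}/(r(r+1)) − w/r + 1/(r+1) = u²/2. Define C_n(r,j) by (w^{j+1} − 1)/(j+1) = Σ_{n≥0} C_n(r,j) u^{n+1} (with left-hand side replaced by log w when j = −1), and set f_j(T) = Σ_{k≥0} (2k+1)!! C_{2k}(r,j)(−T)^k. Then f_{j+1}(T) = (1 + ((r−1)/2 − j)T + (r+1)T² d/dT) f_j(T). -/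
noncomputable section

/-- The field `ℚ(r,j)` of rational functions in the two formal variables `r`, `j`. -/
abbrev KK : Type := FractionRing (MvPolynomial (Fin 2) ℚ)

/-- The formal variable `r` as an element of `ℚ(r,j)`. -/
def Rv : KK := algebraMap (MvPolynomial (Fin 2) ℚ) KK (MvPolynomial.X 0)

/-- The formal variable `j` as an element of `ℚ(r,j)`. -/
def Jv : KK := algebraMap (MvPolynomial (Fin 2) ℚ) KK (MvPolynomial.X 1)

/-- Generalized binomial coefficient `binom(a,k) = a(a-1)⋯(a-k+1)/k!`. -/
def gbinom (a : KK) (k : ℕ) : KK :=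
  (∏ i ∈ Finset.range k, (a - (i : KK))) / (k.factorial : KK)

/-- The binomial-series power `(1+v)^a = Σ_k binom(a,k) v^k`, well defined as a power
series when `v` has zero constant term. -/
def bpow (a : KK) (v : PowerSeries KK) : PowerSeries KK :=
  PowerSeries.mk fun n =>
    ∑ k ∈ Finset.range (n + 1), gbinom a k * PowerSeries.coeff (R := KK) n (v ^ k)

/-- `isW ρ w` says that `w = w(u) ∈ 1 + u + u²·[[u]]` solves
`w^{ρ+1}/(ρ(ρ+1)) - w/ρ + 1/(ρ+1) = u²/2`, where `w^{ρ+1}` is the binomial series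
`(1 + (w-1))^{ρ+1}`. -/
def isW (ρ : KK) (w : PowerSeries KK) : Prop :=
  PowerSeries.coeff (R := KK) 0 w = 1 ∧ PowerSeries.coeff (R := KK) 1 w = 1 ∧
    PowerSeries.C (R := KK) (ρ * (ρ + 1))⁻¹ * bpow (ρ + 1) (w - 1)
        - PowerSeries.C (R := KK) ρ⁻¹ * w + PowerSeries.C (R := KK) (ρ + 1)⁻¹
      = PowerSeries.C (R := KK) (2 : KK)⁻¹ * PowerSeries.X ^ 2

/-- `Cco a w n` is the coefficient `C_n(r,a)`: the coefficient of `u^{n+1}` in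
`(w^{a+1} - 1)/(a+1)`. -/
def Cco (a : KK) (w : PowerSeries KK) (n : ℕ) : KK :=
  (a + 1)⁻¹ * PowerSeries.coeff (R := KK) (n + 1) (bpow (a + 1) (w - 1) - 1)

/-- `fT a w` is the series `f_a(T) = Σ_{k≥0} (2k+1)!! C_{2k}(r,a) (-T)^k`. -/
def fT (a : KK) (w : PowerSeries KK) : PowerSeries KK :=
  PowerSeries.mk fun k =>
    (Nat.doubleFactorial (2 * k + 1) : KK) * Cco a w (2 * k) * (-1) ^ k

/-- The formal derivative `d/dT` of a power series. -/
def psDeriv (f : PowerSeries KK) : PowerSeries KK :=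
  PowerSeries.mk fun n => ((n : KK) + 1) * PowerSeries.coeff (R := KK) (n + 1) f

/-!
Write `W_a = w^a` for the binomial series in `w - 1`. Since `d/du W_{a+1} = (a+1) W_a w'`,
the coefficient of `u^n` in `W_a w'` is `(n+1) C_n(r,a)`. Differentiating the defining equation
gives `(w^r - 1) w' = r u`; together with the equation itself and `w^{r+1} = w^r w` this yields,
for every exponent `a`,
`(w - 1 + (r+1) u²/2) W_a w' = u W_{a+1}`.
Its coefficient of `u^{2k+2}` is a three-term relation between `C_{2k+2}(r,a+1)`, `C_{2k+2}(r,a)`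
and `C_{2k}(r,a)`, which after multiplication by `(2k+1)!! (-1)^k` is the coefficient of
`T^{k+1}` in the recursion for `f_a`.
-/

open PowerSeries Finset
open scoped Nat

lemma algebraMap_X_add_natCast_ne_zero (i : Fin 2) (n : ℕ) :
    algebraMap (MvPolynomial (Fin 2) ℚ) KK (MvPolynomial.X i) + n ≠ 0 := by
  rw [← map_natCast (algebraMap (MvPolynomial (Fin 2) ℚ) KK), ← map_add,
    map_ne_zero_iff _ (IsFractionRing.injective _ _)]
  intro h
  simpa using congrArg (MvPolynomial.pderiv i) h

lemma Rv_ne_zero : Rv ≠ 0 := by simp [Rv]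
lemma Rv_add_one_ne_zero : Rv + 1 ≠ 0 := by simpa [Rv] using algebraMap_X_add_natCast_ne_zero 0 1
lemma Jv_add_one_ne_zero : Jv + 1 ≠ 0 := by simpa [Jv] using algebraMap_X_add_natCast_ne_zero 1 1
lemma Jv_add_one_add_one_ne_zero : Jv + 1 + 1 ≠ 0 := by
  simpa [Jv, add_assoc, one_add_one_eq_two] using algebraMap_X_add_natCast_ne_zero 1 2

lemma descPochhammer_smeval_eq_prod_range {R : Type*} [CommRing R] (k : ℕ) (a : R) :
    (descPochhammer ℤ k).smeval a = ∏ i ∈ range k, (a - (i : R)) := by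
  induction k with
  | zero => simp
  | succ n ih =>
    rw [descPochhammer_succ_right, Polynomial.smeval_mul, ih, prod_range_succ]
    simp [Polynomial.smeval_sub, Polynomial.smeval_natCast]

lemma gbinom_eq_choose (a : KK) (k : ℕ) : gbinom a k = Ring.choose a k := by
  have h := Ring.descPochhammer_eq_factorial_smul_choose a k
  rw [descPochhammer_smeval_eq_prod_range, nsmul_eq_mul] at h
  rw [gbinom, h, mul_div_cancel_left₀ _ (Nat.cast_ne_zero.mpr k.factorial_ne_zero)]

lemma coeff_pow_of_lt {R : Type*} [CommRing R] {v : R⟦X⟧} (hv : constantCoeff v = 0) {n k : ℕ}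
    (h : n < k) : coeff n (v ^ k) = 0 :=
  coeff_of_lt_order n ((Nat.cast_lt.mpr h).trans_le (le_order_pow_of_constantCoeff_eq_zero k hv))

lemma bpow_eq_subst {v : KK⟦X⟧} (hv : constantCoeff v = 0) (a : KK) :
    bpow a v = (PowerSeries.binomialSeries KK a).subst v := by
  ext n
  rw [coeff_subst' (HasSubst.of_constantCoeff_zero' hv), bpow, coeff_mk,
    finsum_eq_sum_of_support_subset (s := range (n + 1))]
  · simp [gbinom_eq_choose]
  · intro k hk
    by_contra hkn
    simp only [Function.mem_support, coe_range, Set.mem_Iio, not_lt] at hk hkn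
    exact hk (by rw [coeff_pow_of_lt hv (by omega), smul_zero])

lemma derivative_binomialSeries {R : Type*} [CommRing R] [BinomialRing R] (r : R) :
    d⁄dX R (PowerSeries.binomialSeries R r) = C r * PowerSeries.binomialSeries R (r - 1) := by
  ext n
  have hchoose := Ring.choose_smul_choose r (Nat.le_add_left 1 n)
  simp only [Nat.choose_one_right, Ring.choose_one_right, Nat.cast_one, Nat.add_sub_cancel]
    at hchoose
  simp [coeff_derivative, ← hchoose, nsmul_eq_mul, mul_comm]

section bpow

variable {v : KK⟦X⟧}

lemma bpow_add (hv : constantCoeff v = 0) (a b : KK) :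
    bpow (a + b) v = bpow a v * bpow b v := by
  simp only [bpow_eq_subst hv, binomialSeries_add, subst_mul (HasSubst.of_constantCoeff_zero' hv)]

lemma bpow_one (hv : constantCoeff v = 0) : bpow 1 v = 1 + v := by
  have hs := HasSubst.of_constantCoeff_zero' hv
  rw [bpow_eq_subst hv, ← Nat.cast_one, binomialSeries_nat, pow_one, subst_add hs, subst_X hs,
    ← coe_substAlgHom hs, map_one]

lemma derivative_bpow (hv : constantCoeff v = 0) (a : KK) :
    d⁄dX KK (bpow a v) = C a * bpow (a - 1) v * d⁄dX KK v := by
  have hs := HasSubst.of_constantCoeff_zero' hv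
  rw [bpow_eq_subst hv, bpow_eq_subst hv, derivative_subst hs, derivative_binomialSeries,
    subst_mul hs, subst_C]
  rfl

end bpow

section Cco

variable {w : KK⟦X⟧}

lemma coeff_succ_bpow_add_one {a : KK} (ha : a + 1 ≠ 0) (n : ℕ) :
    coeff (n + 1) (bpow (a + 1) (w - 1)) = (a + 1) * Cco a w n := by
  rw [Cco, map_sub, coeff_one, if_neg n.succ_ne_zero, sub_zero, mul_inv_cancel_left₀ ha]

lemma coeff_bpow_mul_derivative (hv : constantCoeff (w - 1) = 0) {a : KK} (ha : a + 1 ≠ 0)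
    (n : ℕ) : coeff n (bpow a (w - 1) * d⁄dX KK w) = (n + 1) * Cco a w n := by
  have h := congrArg (coeff n) (derivative_bpow hv (a + 1))
  rw [coeff_derivative, coeff_succ_bpow_add_one ha, add_sub_cancel_right, map_sub,
    derivative_one, sub_zero, mul_assoc (C _), coeff_C_mul] at h
  exact mul_left_cancel₀ ha (by linear_combination -h)

end Cco

section isW

variable {ρ : KK} {w : KK⟦X⟧}

lemma isW.constantCoeff_sub_one (hw : isW ρ w) : constantCoeff (w - 1) = 0 := by
  rw [map_sub, map_one, ← coeff_zero_eq_constantCoeff_apply, hw.1, sub_self]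

lemma isW.bpow_add_one_sub (hρ : ρ ≠ 0) (hρ1 : ρ + 1 ≠ 0) (hw : isW ρ w) :
    bpow (ρ + 1) (w - 1) - C (ρ + 1) * w + C ρ = C (ρ * (ρ + 1) / 2) * X ^ 2 := by
  have h := congrArg (C (ρ * (ρ + 1)) * ·) hw.2.2
  have c1 : C (ρ * (ρ + 1)) * C (ρ * (ρ + 1))⁻¹ = (1 : KK⟦X⟧) := by
    rw [← map_mul, mul_inv_cancel₀ (mul_ne_zero hρ hρ1), map_one]
  have c2 : C (ρ * (ρ + 1)) * C ρ⁻¹ = (C (ρ + 1) : KK⟦X⟧) := by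
    rw [← map_mul]; congr 1; field_simp
  have c3 : C (ρ * (ρ + 1)) * C (ρ + 1)⁻¹ = (C ρ : KK⟦X⟧) := by
    rw [← map_mul]; congr 1; field_simp
  have c4 : C (ρ * (ρ + 1)) * C 2⁻¹ = (C (ρ * (ρ + 1) / 2) : KK⟦X⟧) := by
    rw [← map_mul, div_eq_mul_inv]
  linear_combination h - bpow (ρ + 1) (w - 1) * c1 + w * c2 - c3 + X ^ 2 * c4

lemma isW.bpow_sub_one_mul_derivative (hρ : ρ ≠ 0) (hρ1 : ρ + 1 ≠ 0) (hw : isW ρ w) :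
    (bpow ρ (w - 1) - 1) * d⁄dX KK w = C ρ * X := by
  have h := congrArg (d⁄dX KK) (hw.bpow_add_one_sub hρ hρ1)
  simp only [Derivation.map_add, Derivation.map_sub, derivative_bpow hw.constantCoeff_sub_one,
    add_sub_cancel_right, Derivation.map_one_eq_zero, sub_zero, Derivation.leibniz, smul_eq_mul,
    derivative_C, add_zero, mul_zero, Derivation.leibniz_pow, Nat.add_one_sub_one, pow_one,
    derivative_X, mul_one, nsmul_eq_mul, Nat.cast_ofNat] at h
  have c : C (ρ * (ρ + 1) / 2) * 2 = (C (ρ + 1) * C ρ : KK⟦X⟧) := by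
    rw [← map_ofNat C 2, ← map_mul, ← map_mul]; congr 1; ring
  refine mul_left_cancel₀ ((map_ne_zero_iff _ C_injective).mpr hρ1) ?_
  linear_combination h + X * c

lemma isW.bpow_mul_derivative_recursion (hρ : ρ ≠ 0) (hρ1 : ρ + 1 ≠ 0) (hw : isW ρ w)
    (a : KK) :
    bpow (a + 1) (w - 1) * d⁄dX KK w - bpow a (w - 1) * d⁄dX KK w
        + C ((ρ + 1) / 2) * (X ^ 2 * (bpow a (w - 1) * d⁄dX KK w))
      = X * bpow (a + 1) (w - 1) := by
  have hv := hw.constantCoeff_sub_one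
  have hwa : bpow (a + 1) (w - 1) = bpow a (w - 1) * w := by
    rw [bpow_add hv, bpow_one hv, add_sub_cancel]
  have hwρ : bpow (ρ + 1) (w - 1) = bpow ρ (w - 1) * w := by
    rw [bpow_add hv, bpow_one hv, add_sub_cancel]
  have c : C ρ * C ((ρ + 1) / 2) = (C (ρ * (ρ + 1) / 2) : KK⟦X⟧) := by
    rw [← map_mul, mul_div_assoc]
  have hC : C (ρ + 1) = (C ρ + 1 : KK⟦X⟧) := by rw [map_add, map_one]
  refine mul_left_cancel₀ ((map_ne_zero_iff _ C_injective).mpr hρ) ?_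
  linear_combination (X ^ 2 * (bpow a (w - 1) * d⁄dX KK w)) * c
    - (bpow a (w - 1) * d⁄dX KK w) * hw.bpow_add_one_sub hρ hρ1
    + (bpow a (w - 1) * d⁄dX KK w) * hwρ
    + (w * bpow a (w - 1)) * hw.bpow_sub_one_mul_derivative hρ hρ1
    + (C ρ * d⁄dX KK w - C ρ * X) * hwa
    - (bpow a (w - 1) * d⁄dX KK w * w) * hC

lemma isW.Cco_add_one_zero (hρ : ρ ≠ 0) (hρ1 : ρ + 1 ≠ 0) (hw : isW ρ w) {a : KK}
    (ha : a + 1 ≠ 0) (ha' : a + 1 + 1 ≠ 0) : Cco (a + 1) w 0 = Cco a w 0 := by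
  have h := congrArg (coeff 0) (hw.bpow_mul_derivative_recursion hρ hρ1 a)
  have hv := hw.constantCoeff_sub_one
  rw [map_add, map_sub, coeff_bpow_mul_derivative hv ha', coeff_bpow_mul_derivative hv ha,
    coeff_C_mul, coeff_X_pow_mul', if_neg (by omega), coeff_zero_X_mul] at h
  linear_combination h

lemma isW.Cco_recurrence (hρ : ρ ≠ 0) (hρ1 : ρ + 1 ≠ 0) (hw : isW ρ w) {a : KK}
    (ha : a + 1 ≠ 0) (ha' : a + 1 + 1 ≠ 0) (n : ℕ) :
    (n + 3) * Cco (a + 1) w (n + 2)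
      = (n + 3) * Cco a w (n + 2) + (a + 1 - (ρ + 1) / 2 * (n + 1)) * Cco a w n := by
  have h := congrArg (coeff (n + 2)) (hw.bpow_mul_derivative_recursion hρ hρ1 a)
  have hv := hw.constantCoeff_sub_one
  rw [map_add, map_sub, coeff_bpow_mul_derivative hv ha', coeff_bpow_mul_derivative hv ha,
    coeff_C_mul, coeff_X_pow_mul, coeff_bpow_mul_derivative hv ha, coeff_succ_X_mul,
    coeff_succ_bpow_add_one ha] at h
  push_cast at h
  linear_combination h

end isW

lemma coeff_fT (a : KK) (w : KK⟦X⟧) (k : ℕ) :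
    coeff k (fT a w) = ((2 * k + 1)‼ : KK) * Cco a w (2 * k) * (-1) ^ k :=
  coeff_mk _ _

lemma coeff_succ_X_sq_mul_psDeriv (f : KK⟦X⟧) (m : ℕ) :
    coeff (m + 1) (X ^ 2 * psDeriv f) = m * coeff m f := by
  cases m with
  | zero => simp [coeff_X_pow_mul']
  | succ l =>
    rw [show l + 1 + 1 = l + 2 from rfl, coeff_X_pow_mul, psDeriv, coeff_mk]
    push_cast
    ring

/-- The recursion `f_{j+1}(T) = (1 + ((r-1)/2 - j)T + (r+1)T² d/dT) f_j(T)` for the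
series `f_j(T) = Σ_k (2k+1)!! C_{2k}(r,j)(-T)^k`, where the `C_n(r,j)` come from the
solution `w` of `w^{r+1}/(r(r+1)) - w/r + 1/(r+1) = u²/2`. -/
theorem stmt3 (w : PowerSeries KK) (hw : isW Rv w) :
    fT (Jv + 1) w
      = fT Jv w + PowerSeries.C (R := KK) ((Rv - 1) / 2 - Jv) * PowerSeries.X * fT Jv w
        + PowerSeries.C (R := KK) (Rv + 1) * PowerSeries.X ^ 2 * psDeriv (fT Jv w) := by
  have hρ := Rv_ne_zero
  have hρ1 := Rv_add_one_ne_zero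
  have hj1 := Jv_add_one_ne_zero
  have hj2 := Jv_add_one_add_one_ne_zero
  ext k
  rw [map_add, map_add, mul_assoc, coeff_C_mul, mul_assoc, coeff_C_mul]
  rcases k with _ | m
  · rw [coeff_zero_X_mul, coeff_X_pow_mul', if_neg (by omega), coeff_fT, coeff_fT,
      hw.Cco_add_one_zero hρ hρ1 hj1 hj2]
    ring
  · have hrec := hw.Cco_recurrence hρ hρ1 hj1 hj2 (2 * m)
    have hdf : ((2 * (m + 1) + 1)‼ : KK) = (2 * m + 3) * (2 * m + 1)‼ := by
      rw [show 2 * (m + 1) + 1 = 2 * m + 1 + 2 by ring, Nat.doubleFactorial_add_two]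
      push_cast
      ring
    rw [coeff_succ_X_mul, coeff_succ_X_sq_mul_psDeriv, coeff_fT, coeff_fT, coeff_fT, hdf,
      show 2 * (m + 1) = 2 * m + 2 by ring]
    push_cast at hrec
    linear_combination (-((2 * m + 1)‼ * (-1) ^ m : KK)) * hrec
end
end

section
/- Let r be an even positive integer and X an indeterminate. Then Σ_{j=0}^{r/2} (2^{2j}/(2j+1))·binom(j + r/2, 2j)·(X² − 1)^{r/2 − j} = ((X+1)^{r+1} − (X−1)^{r+1})/(2(r+1)) as an identity of polynomials in X. -/
/-!
Put `u = X + 1` and `v = X - 1`, so that `u * v = X² - 1` and `u - v = 2`. The claim is then an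
instance of the homogeneous identity
`(u - v) * ∑ⱼ c(m, j) (u v)^(m - j) (u - v)^(2 j) = u^(2m+1) - v^(2m+1)`, `m = r / 2`, where
`c(m, j) = (2m+1)/(2j+1) · binom(m+j, 2j) = binom(m+j+1, 2j+1) + binom(m+j, 2j+1)`.
Both sides satisfy `f (m + 2) = (u² + v²) f (m + 1) - (u v)² f m`, with `u² + v² = 2 u v + (u - v)²`;
for the left side this recurrence reduces, coefficient by coefficient, to Pascal's rule.
-/

open Polynomial Finset

def lucasCoeff (m j : ℕ) : ℕ := (m + j + 1).choose (2 * j + 1) + (m + j).choose (2 * j + 1)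

lemma lucasCoeff_eq_zero {m j : ℕ} (h : m < j) : lucasCoeff m j = 0 := by
  simp [lucasCoeff, Nat.choose_eq_zero_of_lt, show m + j + 1 < 2 * j + 1 by omega,
    show m + j < 2 * j + 1 by omega]

lemma lucasCoeff_zero_right (m : ℕ) : lucasCoeff m 0 = 2 * m + 1 := by
  simp only [lucasCoeff, add_zero, mul_zero, zero_add, Nat.choose_one_right]
  ring

lemma lucasCoeff_add_two_succ (m j : ℕ) :
    lucasCoeff (m + 2) (j + 1) + lucasCoeff m (j + 1) =
      2 * lucasCoeff (m + 1) (j + 1) + lucasCoeff (m + 1) j := by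
  simp only [lucasCoeff, show m + 2 + (j + 1) = m + j + 1 + 1 + 1 by ring,
    show m + 1 + (j + 1) = m + j + 1 + 1 by ring, show m + (j + 1) = m + j + 1 by ring,
    show m + 1 + j = m + j + 1 by ring, show 2 * (j + 1) + 1 = 2 * j + 1 + 1 + 1 by ring,
    Nat.choose_succ_succ']
  ring

lemma two_mul_add_one_mul_lucasCoeff {m j : ℕ} (h : j ≤ m) :
    (2 * j + 1) * lucasCoeff m j = (2 * m + 1) * (m + j).choose (2 * j) := by
  have h₁ := Nat.add_one_mul_choose_eq (m + j) (2 * j)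
  have h₂ := Nat.choose_succ_right_eq (m + j) (2 * j)
  rw [show m + j - 2 * j = m - j by omega] at h₂
  unfold lucasCoeff
  nlinarith [h₁, h₂, Nat.sub_add_cancel h]

section

variable {R : Type*} [CommSemiring R]

def lucasSum (a b : R) (m : ℕ) : R :=
  ∑ j ∈ range (m + 1), (lucasCoeff m j : R) * a ^ (m - j) * b ^ j

lemma lucasSum_eq_sum_range (a b : R) {m N : ℕ} (h : m < N) :
    lucasSum a b m = ∑ j ∈ range N, (lucasCoeff m j : R) * a ^ (m - j) * b ^ j := by
  refine sum_subset (range_subset_range.2 h) fun j _ hj => ?_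
  simp [lucasCoeff_eq_zero (show m < j by simpa using hj)]

-- For `j > m` the truncated exponents disagree, but then the coefficient vanishes.
lemma pow_mul_lucasCoeff_mul (a b : R) (m j k : ℕ) :
    a ^ k * ((lucasCoeff m j : R) * a ^ (m - j) * b ^ j) =
      lucasCoeff m j * a ^ (m + k - j) * b ^ j := by
  rcases le_or_gt j m with h | h
  · rw [show m + k - j = k + (m - j) by omega, pow_add]
    ring
  · simp [lucasCoeff_eq_zero h]

lemma lucasSum_add_two (a b : R) (m : ℕ) :
    lucasSum a b (m + 2) + a ^ 2 * lucasSum a b m = (2 * a + b) * lucasSum a b (m + 1) := by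
  have hcoeff (j : ℕ) : (lucasCoeff (m + 2) (j + 1) : R) + lucasCoeff m (j + 1) =
      2 * (lucasCoeff (m + 1) (j + 1) : R) + lucasCoeff (m + 1) j := by
    simpa using congrArg ((↑) : ℕ → R) (lucasCoeff_add_two_succ m j)
  have hcoeff₀ : (lucasCoeff (m + 2) 0 : R) + lucasCoeff m 0 = 2 * (lucasCoeff (m + 1) 0 : R) := by
    simp only [lucasCoeff_zero_right]
    push_cast
    ring
  have hL : lucasSum a b (m + 2) + a ^ 2 * lucasSum a b m =
      ∑ j ∈ range (m + 2), ((lucasCoeff (m + 2) (j + 1) : R) + lucasCoeff m (j + 1)) *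
        a ^ (m + 1 - j) * b ^ (j + 1) + (lucasCoeff (m + 2) 0 + lucasCoeff m 0) * a ^ (m + 2) := by
    rw [lucasSum, lucasSum_eq_sum_range a b (show m < m + 3 by omega), mul_sum,
      ← sum_add_distrib, sum_range_succ']
    simp only [pow_mul_lucasCoeff_mul]
    congr 1
    · refine sum_congr rfl fun j _ => ?_
      rw [show m + 2 - (j + 1) = m + 1 - j by omega]
      ring
    · simp only [Nat.sub_zero, pow_zero]
      ring
  have hR : (2 * a + b) * lucasSum a b (m + 1) =
      ∑ j ∈ range (m + 2), (2 * (lucasCoeff (m + 1) (j + 1) : R) + lucasCoeff (m + 1) j) *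
        a ^ (m + 1 - j) * b ^ (j + 1) + 2 * lucasCoeff (m + 1) 0 * a ^ (m + 2) := by
    rw [show (2 * a + b) * lucasSum a b (m + 1) =
        2 * (a ^ 1 * lucasSum a b (m + 1)) + b * lucasSum a b (m + 1) by ring]
    nth_rw 1 [lucasSum_eq_sum_range a b (show m + 1 < m + 3 by omega)]
    rw [lucasSum, mul_sum, mul_sum, mul_sum, sum_range_succ', add_right_comm, ← sum_add_distrib]
    simp only [pow_mul_lucasCoeff_mul]
    congr 1
    · refine sum_congr rfl fun j _ => ?_
      rw [show m + 1 + 1 - (j + 1) = m + 1 - j by omega]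
      ring
    · simp only [Nat.sub_zero, pow_zero]
      ring
  rw [hL, hR, hcoeff₀]
  simp only [hcoeff]

end

theorem sub_mul_lucasSum {R : Type*} [CommRing R] (u v : R) (m : ℕ) :
    (u - v) * lucasSum (u * v) ((u - v) ^ 2) m = u ^ (2 * m + 1) - v ^ (2 * m + 1) := by
  induction m using Nat.twoStepInduction with
  | zero => simp [lucasSum, lucasCoeff]
  | one =>
    rw [lucasSum, sum_range_succ, sum_range_one, lucasCoeff_zero_right,
      show lucasCoeff 1 1 = 1 from rfl]
    push_cast
    ring
  | more m ih₀ ih₁ =>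
    linear_combination (u - v) * lucasSum_add_two (u * v) ((u - v) ^ 2) m +
      (2 * (u * v) + (u - v) ^ 2) * ih₁ - (u * v) ^ 2 * ih₀

theorem stmt7_general (r : ℕ) (he : Even r) :
    ∑ j ∈ Finset.range (r / 2 + 1),
        (((2 : ℚ) ^ (2 * j) / (2 * (j : ℚ) + 1)) * (Nat.choose (j + r / 2) (2 * j) : ℚ)) •
          ((Polynomial.X ^ 2 - 1 : Polynomial ℚ) ^ (r / 2 - j))
      = (2 * (r : ℚ) + 2)⁻¹ •
          ((Polynomial.X + 1 : Polynomial ℚ) ^ (r + 1) - (Polynomial.X - 1) ^ (r + 1)) := by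
  obtain ⟨m, rfl⟩ := he
  have key := sub_mul_lucasSum (X + 1 : ℚ[X]) (X - 1) m
  rw [show (X + 1 : ℚ[X]) - (X - 1) = 2 by ring, show (X + 1 : ℚ[X]) * (X - 1) = X ^ 2 - 1 by ring,
    show 2 * m + 1 = m + m + 1 by ring] at key
  rw [show (m + m) / 2 = m by omega, ← key, lucasSum, mul_sum, smul_sum]
  refine sum_congr rfl fun j hj => ?_
  have hc : (2 * (j : ℚ) + 1) * lucasCoeff m j = (2 * (m : ℚ) + 1) * (j + m).choose (2 * j) := by
    rw [add_comm j m]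
    exact_mod_cast two_mul_add_one_mul_lucasCoeff (Nat.lt_succ_iff.1 (mem_range.1 hj))
  have hq : (2 : ℚ) ^ (2 * j) / (2 * j + 1) * (j + m).choose (2 * j) =
      (2 * ((m + m : ℕ) : ℚ) + 2)⁻¹ * (2 * lucasCoeff m j * (2 ^ 2) ^ j) := by
    field_simp
    push_cast
    rw [← pow_mul]
    linear_combination -(2 : ℚ) ^ (2 * j) * hc
  simp only [smul_eq_C_mul, hq, map_mul, map_natCast, map_pow, map_ofNat]
  ring

/-- For `r` an even positive integer,
`Σ_{j=0}^{r/2} (2^{2j}/(2j+1))·binom(j+r/2, 2j)·(X²-1)^{r/2-j}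
  = ((X+1)^{r+1} - (X-1)^{r+1})/(2(r+1))`
as an identity of polynomials in `X` over `ℚ`. -/
theorem stmt7 (r : ℕ) (hr : 0 < r) (he : Even r) :
    ∑ j ∈ Finset.range (r / 2 + 1),
        (((2 : ℚ) ^ (2 * j) / (2 * (j : ℚ) + 1)) * (Nat.choose (j + r / 2) (2 * j) : ℚ)) •
          ((Polynomial.X ^ 2 - 1 : Polynomial ℚ) ^ (r / 2 - j))
      = (2 * (r : ℚ) + 2)⁻¹ •
          ((Polynomial.X + 1 : Polynomial ℚ) ^ (r + 1) - (Polynomial.X - 1) ^ (r + 1)) :=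
  stmt7_general r he
end

section
/- Let r ≥ 2 be an integer. The polynomial equation ((y+x)^{r+1} − (y−x)^{r+1})/(2x) − r − 1 = 0 (equivalently Σ_{i=0}^{⌊r/2⌋} binom(r+1, 2i+1) x^{2i} y^{r−2i} = r+1) has a unique formal power series solution y(x) ∈ 1 + x²ℚ[[x²]], and it begins y(x) = 1 − ((r−1)/6)x² + ((r−1)(r−3)(2r+1)/360)x⁴ + O(x⁶). -/
/-!
Write the equation as `Q(y) = 0` for a polynomial `Q` in `y` over `ℚ⟦x⟧`. Modulo `x` it reads
`(r + 1)(y^r - 1) = 0`, of which `y = 1` is a simple root: `Q'(1)` has constant term `r(r + 1)`.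
By Taylor expansion, if `y ≡ z mod x^n` then the `x^n`-coefficients of `Q(y)` and `Q(z)` differ by
`r(r + 1)` times those of `y` and `z`, so (as in Hensel's lemma) the coefficients of a root with
constant term `1` exist and are determined one at a time. Since `Q` involves `x` only through `x²`,
`y(-x)` is again a root, hence `y` is even by uniqueness. The coefficients of `x²` and `x⁴` are
then read off from the equation.
-/

/-- `isSol r y` says that `y ∈ 1 + x²ℚ[[x²]]` and `y` solves
`Σ_{i=0}^{⌊r/2⌋} binom(r+1, 2i+1) x^{2i} y^{r-2i} = r+1`. -/
def isSol (r : ℕ) (y : PowerSeries ℚ) : Prop :=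
  PowerSeries.coeff 0 y = 1 ∧ (∀ n : ℕ, Odd n → PowerSeries.coeff n y = 0) ∧
    ∑ i ∈ Finset.range (r / 2 + 1),
        PowerSeries.C (Nat.choose (r + 1) (2 * i + 1) : ℚ) * PowerSeries.X ^ (2 * i)
          * y ^ (r - 2 * i)
      = PowerSeries.C ((r : ℚ) + 1)

open PowerSeries Finset

namespace PowerSeries

variable {R : Type*} [CommRing R]

theorem coeff_eval_sub_eval_of_X_pow_dvd (Q : Polynomial R⟦X⟧) {y z : R⟦X⟧} {n : ℕ}
    (hn : 0 < n) (h : X ^ n ∣ y - z) :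
    coeff n (Q.eval y) - coeff n (Q.eval z) =
      constantCoeff (Q.derivative.eval z) * (coeff n y - coeff n z) := by
  obtain ⟨w, hw⟩ := h
  obtain ⟨k, hk⟩ := Q.binomExpansion z (y - z)
  rw [add_sub_cancel] at hk
  have hquad : coeff n (k * (y - z) ^ 2) = 0 := by
    have hsq : X ^ (2 * n) ∣ (y - z) ^ 2 := ⟨w ^ 2, by rw [hw]; ring⟩
    exact X_pow_dvd_iff.mp ((pow_dvd_pow X (by omega : n + 1 ≤ 2 * n)).trans hsq |>.mul_left k)
      n n.lt_succ_self
  have hlin : Q.eval y - Q.eval z = (Q.derivative.eval z * w) * X ^ n + k * (y - z) ^ 2 := by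
    rw [hk, hw]; ring
  rw [← map_sub, ← map_sub, hlin, map_add, hquad, add_zero, hw, mul_comm (X ^ n),
    coeff_mul_X_pow', coeff_mul_X_pow', if_pos le_rfl, if_pos le_rfl, Nat.sub_self,
    coeff_zero_eq_constantCoeff_apply, coeff_zero_eq_constantCoeff_apply, map_mul]

theorem constantCoeff_eval_eq (Q : Polynomial R⟦X⟧) {y z : R⟦X⟧}
    (h : constantCoeff y = constantCoeff z) :
    constantCoeff (Q.eval y) = constantCoeff (Q.eval z) := by
  rw [← sub_eq_zero, ← map_sub, ← X_dvd_iff] at h ⊢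
  exact h.trans (Polynomial.sub_dvd_eval_sub y z Q)

theorem eq_of_eval_eq_zero (Q : Polynomial R⟦X⟧) {y z : R⟦X⟧}
    (hy : Q.eval y = 0) (hz : Q.eval z = 0) (h0 : constantCoeff y = constantCoeff z)
    (hQ' : IsUnit (constantCoeff (Q.derivative.eval z))) : y = z := by
  have hdvd : ∀ n, X ^ (n + 1) ∣ y - z := by
    intro n
    induction n with
    | zero => rwa [zero_add, pow_one, X_dvd_iff, map_sub, sub_eq_zero]
    | succ n ih =>
      refine X_pow_dvd_iff.mpr fun m hm => ?_
      rcases Nat.lt_succ_iff_lt_or_eq.mp hm with hm | rfl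
      · exact X_pow_dvd_iff.mp ih m hm
      · have key := coeff_eval_sub_eval_of_X_pow_dvd Q n.succ_pos ih
        rw [hy, hz, sub_self, ← map_sub] at key
        exact hQ'.mul_right_eq_zero.mp key.symm
  ext n
  exact sub_eq_zero.mp (by simpa using X_pow_dvd_iff.mp (hdvd n) n n.lt_succ_self)

/-- Newton's iteration, one coefficient at a time: the `n`-th coefficient cancels the
`X ^ n`-coefficient of `Q` evaluated at the truncation below `n`. -/
noncomputable def newtonCoeff (Q : Polynomial R⟦X⟧) (b : R) (n : ℕ) : R :=
  if n = 0 then b else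
    -Ring.inverse (constantCoeff (Q.derivative.eval (C b))) *
      coeff n (Q.eval (mk fun k => if k < n then newtonCoeff Q b k else 0))
termination_by n

theorem exists_eval_eq_zero (Q : Polynomial R⟦X⟧) (b : R)
    (hb : constantCoeff (Q.eval (C b)) = 0)
    (hQ' : IsUnit (constantCoeff (Q.derivative.eval (C b)))) :
    ∃ y : R⟦X⟧, constantCoeff y = b ∧ Q.eval y = 0 := by
  have ha0 : newtonCoeff Q b 0 = b := by rw [newtonCoeff, if_pos rfl]
  have han : ∀ n, 0 < n → newtonCoeff Q b n =
      -Ring.inverse (constantCoeff (Q.derivative.eval (C b))) *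
        coeff n (Q.eval (mk fun k => if k < n then newtonCoeff Q b k else 0)) :=
    fun n hn => by rw [newtonCoeff, if_neg hn.ne']
  generalize newtonCoeff Q b = a at ha0 han
  have hy0 : constantCoeff (mk a) = constantCoeff (C b) := by
    rw [← coeff_zero_eq_constantCoeff_apply, coeff_mk, ha0, constantCoeff_C]
  refine ⟨mk a, hy0.trans (constantCoeff_C b), ext fun n => ?_⟩
  rcases n.eq_zero_or_pos with rfl | hn
  · rw [coeff_zero_eq_constantCoeff_apply, constantCoeff_eval_eq Q hy0, hb, map_zero]
  set t : R⟦X⟧ := mk fun k => if k < n then a k else 0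
  have hdvd : X ^ n ∣ mk a - t := X_pow_dvd_iff.mpr fun m hm => by simp [t, hm]
  have ht0 : constantCoeff t = constantCoeff (C b) := by
    rw [← coeff_zero_eq_constantCoeff_apply, coeff_mk, if_pos hn, ha0, constantCoeff_C]
  have key := coeff_eval_sub_eval_of_X_pow_dvd Q hn hdvd
  rw [constantCoeff_eval_eq _ ht0, coeff_mk, han n hn, coeff_mk, if_neg (lt_irrefl n)] at key
  rw [map_zero]
  linear_combination key - coeff n (Q.eval t) * Ring.mul_inverse_cancel _ hQ'

theorem coeff_two_pow {y : R⟦X⟧} (h0 : constantCoeff y = 1) (h1 : coeff 1 y = 0) (p : ℕ) :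
    coeff 2 (y ^ p) = p * coeff 2 y := by
  induction p with
  | zero => simp [coeff_one]
  | succ p ih =>
    simp only [pow_succ, coeff_mul, Nat.sum_antidiagonal_succ, coeff_zero_eq_constantCoeff,
      map_pow, h0, h1, ih, HasAntidiagonal.antidiagonal_zero, sum_singleton, Nat.reduceAdd]
    push_cast
    ring

theorem coeff_four_pow {y : R⟦X⟧} (h0 : constantCoeff y = 1) (h1 : coeff 1 y = 0)
    (h3 : coeff 3 y = 0) (p : ℕ) :
    coeff 4 (y ^ p) = p * coeff 4 y + p.choose 2 * coeff 2 y ^ 2 := by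
  induction p with
  | zero => simp [coeff_one]
  | succ p ih =>
    simp only [pow_succ, coeff_mul, Nat.sum_antidiagonal_succ, coeff_zero_eq_constantCoeff,
      map_pow, h0, h1, h3, ih, coeff_two_pow h0 h1, HasAntidiagonal.antidiagonal_zero,
      sum_singleton, Nat.reduceAdd, Nat.choose_succ_succ, Nat.choose_one_right]
    push_cast
    ring

end PowerSeries

theorem Nat.cast_choose_three {K : Type*} [Field K] [CharZero K] (n : ℕ) :
    (n.choose 3 : K) = n * (n - 1) * (n - 2) / 6 := by
  rw [Nat.cast_choose_eq_descPochhammer_div]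
  simp only [descPochhammer_succ_eval, descPochhammer_zero, Polynomial.eval_one, Nat.factorial]
  push_cast
  ring

theorem Nat.cast_choose_five {K : Type*} [Field K] [CharZero K] (n : ℕ) :
    (n.choose 5 : K) = n * (n - 1) * (n - 2) * (n - 3) * (n - 4) / 120 := by
  rw [Nat.cast_choose_eq_descPochhammer_div]
  simp only [descPochhammer_succ_eval, descPochhammer_zero, Polynomial.eval_one, Nat.factorial]
  push_cast
  ring

/-- `((Y + x)^(r+1) - (Y - x)^(r+1)) / (2x) - (r + 1)` as a polynomial in `Y` over `ℚ⟦x⟧`. -/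
noncomputable def centralDiffPoly (r : ℕ) : Polynomial ℚ⟦X⟧ :=
  ∑ i ∈ range (r / 2 + 1),
      Polynomial.C (C ((r + 1).choose (2 * i + 1) : ℚ) * X ^ (2 * i)) * Polynomial.X ^ (r - 2 * i) -
    Polynomial.C (C ((r : ℚ) + 1))

theorem eval_centralDiffPoly (r : ℕ) (y : ℚ⟦X⟧) :
    (centralDiffPoly r).eval y =
      ∑ i ∈ range (r / 2 + 1), C ((r + 1).choose (2 * i + 1) : ℚ) * X ^ (2 * i) * y ^ (r - 2 * i) -
        C ((r : ℚ) + 1) := by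
  simp [centralDiffPoly, Polynomial.eval_finsetSum]

theorem isSol_iff (r : ℕ) (y : ℚ⟦X⟧) :
    isSol r y ↔ constantCoeff y = 1 ∧ (∀ n, Odd n → coeff n y = 0) ∧
      (centralDiffPoly r).eval y = 0 := by
  rw [isSol, eval_centralDiffPoly, sub_eq_zero, coeff_zero_eq_constantCoeff_apply]

theorem constantCoeff_eval_centralDiffPoly_one (r : ℕ) :
    constantCoeff ((centralDiffPoly r).eval (C 1)) = 0 := by
  simp [eval_centralDiffPoly, sum_range_succ']

theorem constantCoeff_derivative_eval_centralDiffPoly_one (r : ℕ) :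
    constantCoeff ((centralDiffPoly r).derivative.eval (C 1)) = ((r : ℚ) + 1) * r := by
  simp only [centralDiffPoly, Polynomial.derivative_sub, Polynomial.derivative_sum,
    Polynomial.derivative_C_mul_X_pow, Polynomial.derivative_C]
  simp [Polynomial.eval_finsetSum, sum_range_succ']

theorem eval_centralDiffPoly_rescale_neg_one (r : ℕ) (y : ℚ⟦X⟧) :
    (centralDiffPoly r).eval (rescale (-1) y) = rescale (-1) ((centralDiffPoly r).eval y) := by
  simp [eval_centralDiffPoly, Even.neg_pow]

theorem coeff_eval_centralDiffPoly (r n : ℕ) (y : ℚ⟦X⟧) :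
    coeff n ((centralDiffPoly r).eval y) =
      ∑ i ∈ range (n / 2 + 1), ((r + 1).choose (2 * i + 1) : ℚ) * coeff (n - 2 * i) (y ^ (r - 2 * i)) -
        if n = 0 then (r : ℚ) + 1 else 0 := by
  set f : ℕ → ℚ := fun i =>
    if 2 * i ≤ n then ((r + 1).choose (2 * i + 1) : ℚ) * coeff (n - 2 * i) (y ^ (r - 2 * i)) else 0
  have hterm (i : ℕ) :
      coeff n (C ((r + 1).choose (2 * i + 1) : ℚ) * X ^ (2 * i) * y ^ (r - 2 * i)) = f i := by
    rw [mul_assoc, coeff_C_mul, coeff_X_pow_mul']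
    split_ifs <;> simp [f, *]
  have hsum_r : ∑ i ∈ range (r / 2 + 1), f i = ∑ i ∈ range (r / 2 + n / 2 + 2), f i := by
    refine sum_subset (range_subset_range.mpr (by omega)) fun i _ hi => ?_
    have : (r + 1).choose (2 * i + 1) = 0 := Nat.choose_eq_zero_of_lt (by simp at hi; omega)
    simp [f, this]
  have hsum_n : ∑ i ∈ range (n / 2 + 1),
      ((r + 1).choose (2 * i + 1) : ℚ) * coeff (n - 2 * i) (y ^ (r - 2 * i)) =
        ∑ i ∈ range (r / 2 + n / 2 + 2), f i := by
    rw [← sum_subset (range_subset_range.mpr (by omega : n / 2 + 1 ≤ r / 2 + n / 2 + 2))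
      fun i _ hi => if_neg (by simp at hi; omega)]
    exact sum_congr rfl fun i hi => (if_pos (by simp at hi; omega)).symm
  rw [eval_centralDiffPoly, map_sub, map_sum, coeff_C, sum_congr rfl fun i _ => hterm i, hsum_r,
    hsum_n]

section

variable {r : ℕ} (hr : 0 < r)
include hr

theorem isUnit_constantCoeff_derivative_eval_centralDiffPoly {y : ℚ⟦X⟧}
    (hy0 : constantCoeff y = 1) :
    IsUnit (constantCoeff ((centralDiffPoly r).derivative.eval y)) := by
  rw [constantCoeff_eval_eq _ (hy0.trans (constantCoeff_C 1).symm),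
    constantCoeff_derivative_eval_centralDiffPoly_one]
  exact isUnit_iff_ne_zero.mpr (by positivity)

theorem exists_eval_centralDiffPoly_eq_zero :
    ∃ y : ℚ⟦X⟧, constantCoeff y = 1 ∧ (centralDiffPoly r).eval y = 0 :=
  exists_eval_eq_zero _ 1 (constantCoeff_eval_centralDiffPoly_one r)
    (isUnit_constantCoeff_derivative_eval_centralDiffPoly hr (constantCoeff_C 1))

theorem eq_of_eval_centralDiffPoly_eq_zero {y z : ℚ⟦X⟧} (hy0 : constantCoeff y = 1)
    (hz0 : constantCoeff z = 1) (hy : (centralDiffPoly r).eval y = 0)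
    (hz : (centralDiffPoly r).eval z = 0) : y = z :=
  eq_of_eval_eq_zero _ hy hz (hy0.trans hz0.symm)
    (isUnit_constantCoeff_derivative_eval_centralDiffPoly hr hz0)

variable {y : ℚ⟦X⟧} (hy0 : constantCoeff y = 1) (hy : (centralDiffPoly r).eval y = 0)
include hy0 hy

theorem coeff_eq_zero_of_odd_of_eval_centralDiffPoly_eq_zero {n : ℕ} (hn : Odd n) :
    coeff n y = 0 := by
  have hsymm : rescale (-1) y = y := by
    refine eq_of_eval_centralDiffPoly_eq_zero hr ?_ hy0 ?_ hy
    · rw [← coeff_zero_eq_constantCoeff_apply, coeff_rescale, pow_zero, one_mul,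
        coeff_zero_eq_constantCoeff_apply, hy0]
    · rw [eval_centralDiffPoly_rescale_neg_one, hy, map_zero]
  have := congrArg (coeff n) hsymm
  rw [coeff_rescale, hn.neg_one_pow] at this
  linarith

theorem coeff_two_of_eval_centralDiffPoly_eq_zero : coeff 2 y = -((r : ℚ) - 1) / 6 := by
  have h1 := coeff_eq_zero_of_odd_of_eval_centralDiffPoly_eq_zero hr hy0 hy odd_one
  have h := coeff_eval_centralDiffPoly r 2 y
  simp only [hy, map_zero, Order.lt_two_iff, zero_le, Nat.div_self, Nat.reduceAdd, sum_range_succ,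
    range_one, sum_singleton, mul_zero, zero_add, Nat.choose_one_right, Nat.cast_add, Nat.cast_one,
    tsub_zero, coeff_two_pow hy0 h1, mul_one, Nat.cast_choose_three, add_sub_cancel_right, tsub_self,
    coeff_zero_eq_constantCoeff_apply, map_pow, hy0, one_pow, OfNat.ofNat_ne_zero,
    ↓reduceIte] at h
  apply mul_left_cancel₀ (by positivity : ((r : ℚ) + 1) * r ≠ 0)
  linear_combination -h

end

theorem coeff_four_of_eval_centralDiffPoly_eq_zero {r : ℕ} (hr : 2 ≤ r) {y : ℚ⟦X⟧}
    (hy0 : constantCoeff y = 1) (hy : (centralDiffPoly r).eval y = 0) :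
    coeff 4 y = ((r : ℚ) - 1) * ((r : ℚ) - 3) * (2 * (r : ℚ) + 1) / 360 := by
  have hr0 : 0 < r := by omega
  have h1 := coeff_eq_zero_of_odd_of_eval_centralDiffPoly_eq_zero hr0 hy0 hy odd_one
  have h3 := coeff_eq_zero_of_odd_of_eval_centralDiffPoly_eq_zero hr0 hy0 hy (by decide : Odd 3)
  have h := coeff_eval_centralDiffPoly r 4 y
  simp only [hy, map_zero, Nat.reduceDiv, Nat.reduceAdd, sum_range_succ, range_one, sum_singleton,
    mul_zero, zero_add, Nat.choose_one_right, Nat.cast_add, Nat.cast_one, tsub_zero,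
    coeff_four_pow hy0 h1 h3, Nat.cast_choose_two, neg_sub, mul_one, Nat.cast_choose_three,
    coeff_two_of_eval_centralDiffPoly_eq_zero hr0 hy0 hy, add_sub_cancel_right, Nat.reduceSub,
    coeff_two_pow hy0 h1, Nat.cast_sub hr, Nat.cast_ofNat, Nat.reduceMul, Nat.cast_choose_five,
    tsub_self, coeff_zero_eq_constantCoeff_apply, map_pow, hy0, one_pow, OfNat.ofNat_ne_zero,
    ↓reduceIte] at h
  apply mul_left_cancel₀ (by positivity : ((r : ℚ) + 1) * r ≠ 0)
  linear_combination -h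

/-- For an integer `r ≥ 2`, the equation
`((y+x)^{r+1} - (y-x)^{r+1})/(2x) - r - 1 = 0`, i.e.
`Σ_{i=0}^{⌊r/2⌋} binom(r+1,2i+1) x^{2i} y^{r-2i} = r+1`, has a unique formal power series
solution `y(x) ∈ 1 + x²ℚ[[x²]]`, and it begins
`y(x) = 1 - ((r-1)/6)x² + ((r-1)(r-3)(2r+1)/360)x⁴ + O(x⁶)`. -/
theorem stmt8 (r : ℕ) (hr : 2 ≤ r) :
    (∃! y : PowerSeries ℚ, isSol r y) ∧
    ∀ y : PowerSeries ℚ, isSol r y →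
      PowerSeries.coeff 2 y = -((r : ℚ) - 1) / 6 ∧
      PowerSeries.coeff 4 y = ((r : ℚ) - 1) * ((r : ℚ) - 3) * (2 * (r : ℚ) + 1) / 360 := by
  have hr0 : 0 < r := by omega
  obtain ⟨y, hy0, hy⟩ := exists_eval_centralDiffPoly_eq_zero hr0
  have hy_odd n (hn : Odd n) := coeff_eq_zero_of_odd_of_eval_centralDiffPoly_eq_zero hr0 hy0 hy hn
  refine ⟨⟨y, (isSol_iff r y).mpr ⟨hy0, hy_odd, hy⟩, fun z hz => ?_⟩, fun z hz => ?_⟩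
  · obtain ⟨hz0, -, hz⟩ := (isSol_iff r z).mp hz
    exact eq_of_eval_centralDiffPoly_eq_zero hr0 hz0 hy0 hz hy
  · obtain ⟨hz0, -, hz⟩ := (isSol_iff r z).mp hz
    exact ⟨coeff_two_of_eval_centralDiffPoly_eq_zero hr0 hz0 hz,
      coeff_four_of_eval_centralDiffPoly_eq_zero hr hz0 hz⟩
end

section
/- For r = 5, define a_g ∈ ℚ by y = Σ_{g≥0} a_g z^g being the unique power series solution in 1 + zℚ[[z]] of the quintic equation y⁵ − (z/6)y³ + (z²/400)y = 1. Then every coefficient a_g lies in ℤ[1/30], i.e., 30^N · a_g ∈ ℤ for some N depending on g; moreover a_g = 0 whenever g ≡ 3 (mod 5). -/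
/-!
Since `5` is a unit in `ℤ[1/30]`, the root `1` of the quintic modulo `z` is simple, so Hensel's
lemma in the `z`-adically complete ring `ℤ[1/30][[z]]` lifts it to a root `y`; over `ℚ` the same
simplicity makes `y` the only root with constant term `1`. The quintic is invariant under
`y(z) ↦ u·y(u³z)` for `u⁵ = 1`, so for a primitive fifth root of unity `ζ` it has the five
distinct roots `ζᵏ·y(ζ³ᵏz)`; having no `T⁴` term, their sum is `0`. The coefficient of `zᵍ` in
the `k`-th root is `ζ^(k(1+3g))·a_g`, which is `a_g` when `g ≡ 3 (mod 5)`, hence `5·a_g = 0`.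
-/

/-- `y ∈ 1 + zℚ[[z]]` solves the quintic `y⁵ - (z/6)y³ + (z²/400)y = 1`. -/
def isQuinticSol (y : PowerSeries ℚ) : Prop :=
  PowerSeries.coeff (R := ℚ) 0 y = 1 ∧
    y ^ 5 - PowerSeries.C (R := ℚ) (1 / 6) * PowerSeries.X * y ^ 3
        + PowerSeries.C (R := ℚ) (1 / 400) * PowerSeries.X ^ 2 * y = 1

open Polynomial

noncomputable def quintic {A : Type*} [CommRing A] (c₁ c₂ : A) : (PowerSeries A)[X] :=
  X ^ 5 - C (PowerSeries.C c₁ * PowerSeries.X) * X ^ 3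
    + C (PowerSeries.C c₂ * PowerSeries.X ^ 2) * X - 1

section Quintic

variable {A : Type*} [CommRing A] (c₁ c₂ : A)

theorem eval_quintic (y : PowerSeries A) :
    (quintic c₁ c₂).eval y = y ^ 5 - PowerSeries.C c₁ * PowerSeries.X * y ^ 3
      + PowerSeries.C c₂ * PowerSeries.X ^ 2 * y - 1 := by
  simp [quintic]

theorem eval_derivative_quintic (y : PowerSeries A) :
    (derivative (quintic c₁ c₂)).eval y = 5 * y ^ 4
      - 3 * PowerSeries.C c₁ * PowerSeries.X * y ^ 2 + PowerSeries.C c₂ * PowerSeries.X ^ 2 := by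
  simp only [quintic, derivative_sub, derivative_add, derivative_mul, derivative_C,
    derivative_X_pow, derivative_X, derivative_one, eval_sub, eval_add, eval_mul, eval_C, eval_pow,
    eval_X, eval_one, eval_zero]
  push_cast; ring

theorem monic_quintic : (quintic c₁ c₂).Monic := by
  unfold quintic; monicity!

theorem natDegree_quintic [Nontrivial A] : (quintic c₁ c₂).natDegree = 5 := by
  unfold quintic; compute_degree!

theorem nextCoeff_quintic [Nontrivial A] : (quintic c₁ c₂).nextCoeff = 0 := by
  rw [nextCoeff_of_natDegree_pos (by rw [natDegree_quintic]; norm_num), natDegree_quintic]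
  simp only [quintic, coeff_sub, coeff_add, coeff_C_mul, coeff_X_pow, coeff_X, coeff_one]
  norm_num

theorem map_quintic {B : Type*} [CommRing B] (f : A →+* B) :
    (quintic c₁ c₂).map (PowerSeries.map f) = quintic (f c₁) (f c₂) := by
  simp [quintic]

theorem exists_isRoot_quintic (h5 : IsUnit (5 : A)) :
    ∃ y : PowerSeries A, (quintic c₁ c₂).IsRoot y ∧ PowerSeries.constantCoeff y = 1 := by
  have hX : ∀ f : PowerSeries A, PowerSeries.X * f ∈ Ideal.span {PowerSeries.X} := fun f =>
    Ideal.mul_mem_right _ _ (Ideal.subset_span rfl)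
  have hroot : (quintic c₁ c₂).eval 1 ∈ Ideal.span {PowerSeries.X} := by
    rw [eval_quintic, show (1 : PowerSeries A) ^ 5 - PowerSeries.C c₁ * PowerSeries.X * 1 ^ 3
      + PowerSeries.C c₂ * PowerSeries.X ^ 2 * 1 - 1
      = PowerSeries.X * (PowerSeries.C c₂ * PowerSeries.X - PowerSeries.C c₁) by ring]
    exact hX _
  have hsimple : IsUnit (Ideal.Quotient.mk (Ideal.span {PowerSeries.X})
      ((derivative (quintic c₁ c₂)).eval 1)) := by
    rw [show (derivative (quintic c₁ c₂)).eval 1 = PowerSeries.C 5 + PowerSeries.X *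
      (PowerSeries.C c₂ * PowerSeries.X - 3 * PowerSeries.C c₁) by
        rw [eval_derivative_quintic, map_ofNat]; ring,
      map_add, Ideal.Quotient.eq_zero_iff_mem.mpr (hX _), add_zero]
    exact (h5.map PowerSeries.C).map _
  obtain ⟨y, hy, hy1⟩ := HenselianRing.is_henselian _ (monic_quintic c₁ c₂) 1 hroot hsimple
  refine ⟨y, hy, ?_⟩
  rwa [Ideal.mem_span_singleton, PowerSeries.X_dvd_iff, map_sub, map_one, sub_eq_zero] at hy1

theorem isRoot_quintic_C_mul_rescale {u : A} (hu : u ^ 5 = 1) {y : PowerSeries A}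
    (hy : (quintic c₁ c₂).IsRoot y) :
    (quintic c₁ c₂).IsRoot (PowerSeries.C u * PowerSeries.rescale (u ^ 3) y) := by
  have hC : ∀ a : A, PowerSeries.rescale (u ^ 3) (PowerSeries.C a) = PowerSeries.C a := by
    intro a; ext n; rcases n with _ | n <;> simp [PowerSeries.coeff_rescale, PowerSeries.coeff_C]
  have h := congrArg (PowerSeries.rescale (u ^ 3)) hy
  simp only [IsRoot, eval_quintic, map_sub, map_add, map_mul, map_pow, PowerSeries.rescale_X,
    map_one, map_zero, hC] at h ⊢
  set c := PowerSeries.C u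
  set r := PowerSeries.rescale (u ^ 3) y
  have hc : c ^ 5 = 1 := by rw [← map_pow, hu, map_one]
  linear_combination c ^ 5 * h + (PowerSeries.C c₁ * PowerSeries.X * c ^ 3 * r ^ 3
    - PowerSeries.C c₂ * PowerSeries.X ^ 2 * c * r * (c ^ 5 + 1) + 1) * hc

end Quintic

theorem eq_of_isRoot_quintic {K : Type*} [Field K] (h5 : (5 : K) ≠ 0) {c₁ c₂ : K}
    {y y' : PowerSeries K} (hy : (quintic c₁ c₂).IsRoot y) (hy' : (quintic c₁ c₂).IsRoot y')
    (h0 : PowerSeries.constantCoeff y = PowerSeries.constantCoeff y')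
    (hy0 : PowerSeries.constantCoeff y ≠ 0) : y = y' := by
  refine IsLocalRing.eq_of_eval_eq_zero_of_not_isUnit_sub hy hy' ?_ ?_
  · simp [PowerSeries.isUnit_iff_constantCoeff, h0]
  · simp [PowerSeries.isUnit_iff_constantCoeff, eval_derivative_quintic, map_ofNat, h5, hy0]

theorem Polynomial.sum_eq_neg_nextCoeff_of_card_eq_natDegree {R : Type*} [CommRing R]
    [IsDomain R] {p : R[X]} (hp : p.Monic) {s : Finset R} (hs : s.card = p.natDegree)
    (hroot : ∀ x ∈ s, p.IsRoot x) : ∑ x ∈ s, x = -p.nextCoeff := by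
  have hle : s.val ≤ p.roots :=
    (Multiset.le_iff_subset s.nodup).2 fun x hx => (mem_roots hp.ne_zero).2 (hroot x hx)
  have heq : s.val = p.roots :=
    Multiset.eq_of_le_of_card_le hle (by simpa [hs] using card_roots' p)
  rw [← prod_multiset_X_sub_C_of_monic_of_roots_card_eq hp (by rw [← heq]; exact hs),
    multiset_prod_X_sub_C_nextCoeff, ← heq, neg_neg, Finset.sum_eq_multiset_sum, Multiset.map_id']

theorem coeff_eq_zero_of_isRoot_quintic {K : Type*} [CommRing K] [IsDomain K] {ζ : K}
    (hζ : IsPrimitiveRoot ζ 5) {c₁ c₂ : K} {y : PowerSeries K} (hy : (quintic c₁ c₂).IsRoot y)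
    (hy0 : PowerSeries.constantCoeff y ≠ 0) {g : ℕ} (hg : g % 5 = 3) :
    PowerSeries.coeff g y = 0 := by
  classical
  set Y : ℕ → PowerSeries K := fun k =>
    PowerSeries.C (ζ ^ k) * PowerSeries.rescale ((ζ ^ k) ^ 3) y
  have hcoeff : ∀ k n,
      PowerSeries.coeff n (Y k) = ζ ^ (k * (1 + 3 * n)) * PowerSeries.coeff n y := by
    intro k n
    simp only [Y, PowerSeries.coeff_C_mul, PowerSeries.coeff_rescale]
    ring
  have hinj : Set.InjOn Y (Finset.range 5) := by
    intro i hi j hj hij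
    have h := congrArg (PowerSeries.coeff 0) hij
    simp only [hcoeff, mul_zero, add_zero, mul_one] at h
    rw [← PowerSeries.coeff_zero_eq_constantCoeff_apply] at hy0
    exact hζ.pow_inj (Finset.mem_range.mp hi) (Finset.mem_range.mp hj) (mul_right_cancel₀ hy0 h)
  have hsum : ∑ k ∈ Finset.range 5, Y k = 0 := by
    rw [← (Finset.sum_image hinj : ∑ x ∈ (Finset.range 5).image Y, x = _),
      sum_eq_neg_nextCoeff_of_card_eq_natDegree (monic_quintic c₁ c₂)
        (by rw [Finset.card_image_of_injOn hinj, natDegree_quintic]; rfl),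
      nextCoeff_quintic, neg_zero]
    simp only [Finset.mem_image]
    rintro _ ⟨k, -, rfl⟩
    refine isRoot_quintic_C_mul_rescale c₁ c₂ ?_ hy
    rw [← pow_mul, mul_comm, pow_mul, hζ.pow_eq_one, one_pow]
  have hζg : ∀ k, ζ ^ (k * (1 + 3 * g)) = 1 := fun k =>
    (hζ.pow_eq_one_iff_dvd _).2 (Dvd.dvd.mul_left (by omega) k)
  have h := congrArg (PowerSeries.coeff g) hsum
  simp only [map_sum, hcoeff, hζg, one_mul, Finset.sum_const, Finset.card_range, map_zero] at h
  rw [nsmul_eq_mul] at h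
  exact (mul_eq_zero.mp h).resolve_left (by exact_mod_cast hζ.neZero'.out)

/-- `ℤ[1/n]` as a subring of `ℚ`. -/
def awaySubring (n : ℕ) : Subring ℚ where
  carrier := {x | ∃ (N : ℕ) (m : ℤ), (n : ℚ) ^ N * x = m}
  one_mem' := ⟨0, 1, by norm_num⟩
  zero_mem' := ⟨0, 0, by norm_num⟩
  add_mem' := by
    rintro x y ⟨N₁, m₁, h₁⟩ ⟨N₂, m₂, h₂⟩
    refine ⟨N₁ + N₂, n ^ N₂ * m₁ + n ^ N₁ * m₂, ?_⟩
    push_cast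
    linear_combination (n : ℚ) ^ N₂ * h₁ + (n : ℚ) ^ N₁ * h₂
  mul_mem' := by
    rintro x y ⟨N₁, m₁, h₁⟩ ⟨N₂, m₂, h₂⟩
    refine ⟨N₁ + N₂, m₁ * m₂, ?_⟩
    push_cast
    linear_combination ((n : ℚ) ^ N₂ * y) * h₁ + (m₁ : ℚ) * h₂
  neg_mem' := by
    rintro x ⟨N, m, h⟩
    exact ⟨N, -m, by push_cast; linear_combination -h⟩

theorem isQuinticSol_iff {y : PowerSeries ℚ} :
    isQuinticSol y ↔
      PowerSeries.constantCoeff y = 1 ∧ (quintic (1 / 6 : ℚ) (1 / 400)).IsRoot y := by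
  simp only [isQuinticSol, IsRoot, eval_quintic, sub_eq_zero,
    PowerSeries.coeff_zero_eq_constantCoeff_apply]

theorem exists_isQuinticSol_coeff_mem_awaySubring :
    ∃ y, isQuinticSol y ∧ ∀ g, PowerSeries.coeff g y ∈ awaySubring 30 := by
  let c₁ : awaySubring 30 := ⟨1 / 6, 1, 5, by norm_num⟩
  let c₂ : awaySubring 30 := ⟨1 / 400, 4, 2025, by norm_num⟩
  have h5 : IsUnit (5 : awaySubring 30) :=
    IsUnit.of_mul_eq_one ⟨1 / 5, 1, 6, by norm_num⟩
      (Subtype.ext (show (5 : ℚ) * (1 / 5) = 1 by norm_num))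
  obtain ⟨y, hy, hy1⟩ := exists_isRoot_quintic c₁ c₂ h5
  refine ⟨PowerSeries.map (awaySubring 30).subtype y, isQuinticSol_iff.2 ⟨?_, ?_⟩, fun g => ?_⟩
  · rw [← PowerSeries.coeff_zero_eq_constantCoeff_apply, PowerSeries.coeff_map,
      PowerSeries.coeff_zero_eq_constantCoeff_apply, hy1, map_one]
  · have := hy.map (f := PowerSeries.map (awaySubring 30).subtype)
    rwa [map_quintic] at this
  · rw [PowerSeries.coeff_map]
    exact (PowerSeries.coeff g y).2

theorem isQuinticSol.unique {y y' : PowerSeries ℚ} (hy : isQuinticSol y)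
    (hy' : isQuinticSol y') : y = y' := by
  rw [isQuinticSol_iff] at hy hy'
  exact eq_of_isRoot_quintic (by norm_num) hy.2 hy'.2 (hy.1.trans hy'.1.symm) (by simp [hy.1])

theorem isQuinticSol.coeff_eq_zero {y : PowerSeries ℚ} (hy : isQuinticSol y) {g : ℕ}
    (hg : g % 5 = 3) : PowerSeries.coeff g y = 0 := by
  rw [isQuinticSol_iff] at hy
  have hroot := hy.2.map (f := PowerSeries.map (algebraMap ℚ ℂ))
  rw [map_quintic] at hroot
  have h := coeff_eq_zero_of_isRoot_quintic (Complex.isPrimitiveRoot_exp 5 (by norm_num)) hroot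
    (by simp [← PowerSeries.coeff_zero_eq_constantCoeff_apply, PowerSeries.coeff_map, hy.1]) hg
  rw [PowerSeries.coeff_map] at h
  exact (algebraMap ℚ ℂ).injective (h.trans (map_zero _).symm)

/-- The quintic `y⁵ - (z/6)y³ + (z²/400)y = 1` has a unique power series solution
`y = Σ_{g≥0} a_g z^g` in `1 + zℚ[[z]]`; every coefficient `a_g` lies in `ℤ[1/30]`
(i.e. `30^N·a_g ∈ ℤ` for some `N`), and `a_g = 0` whenever `g ≡ 3 (mod 5)`. -/
theorem stmt9 :
    (∃! y : PowerSeries ℚ, isQuinticSol y) ∧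
    ∀ y : PowerSeries ℚ, isQuinticSol y → ∀ g : ℕ,
      (∃ (N : ℕ) (m : ℤ), (30 : ℚ) ^ N * PowerSeries.coeff (R := ℚ) g y = (m : ℚ)) ∧
      (g % 5 = 3 → PowerSeries.coeff (R := ℚ) g y = 0) := by
  obtain ⟨y₀, hy₀, hcoeff⟩ := exists_isQuinticSol_coeff_mem_awaySubring
  refine ⟨⟨y₀, hy₀, fun y hy => hy.unique hy₀⟩, fun y hy g => ⟨?_, hy.coeff_eq_zero⟩⟩
  obtain ⟨N, m, h⟩ := hcoeff g
  exact ⟨N, m, by rw [hy.unique hy₀]; exact_mod_cast h⟩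
end

section
/- Let r ≥ 2 be an integer and y(x) ∈ 1 + x²ℚ[[x²]] the unique solution to ((y+x)^{r+1} − (y−x)^{r+1})/(2x) = r+1. Write y = Σ_{g≥0} ã_g(r)(2x)^{2g}. Then for each fixed g ≥ 0, ã_g(r) is a polynomial in r, and its evaluation at r = −1 satisfies Σ_{g≥0} ã_g(−1)(2x)^{2g} = x/tanh(x) = Σ_{g≥0} (2^{2g} B_{2g}/(2g)!) x^{2g}, so that ã_g(−1)·2^{2g} equals the coefficient of x^{2g} in x·coth(x). -/
open Finset PowerSeries

noncomputable section StmtAux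

namespace StmtAux

/-- falling-type product polynomial `∏_{t<n} (X - (a+t))`. -/
def ff (a : ℚ) (n : ℕ) : Polynomial ℚ :=
  ∏ t ∈ Finset.range n, (Polynomial.X - Polynomial.C (a + t))

/-- `β k` represents `C(r,k)/r`. -/
def bet (k : ℕ) : Polynomial ℚ := Polynomial.C (1 / (k.factorial : ℚ)) * ff 1 (k - 1)

/-- `qq i` represents `C(r+1,2i+1)/(r(r+1))`. -/
def qq (i : ℕ) : Polynomial ℚ := Polynomial.C (1 / ((2*i+1).factorial : ℚ)) * ff 1 (2*i - 1)

/-- `bb i k` represents `C(r-2i, k)`. -/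
def bb (i k : ℕ) : Polynomial ℚ := Polynomial.C (1 / (k.factorial : ℚ)) * ff (2*i) k

@[simp] lemma eval_ff (x a : ℚ) (n : ℕ) :
    (ff a n).eval x = ∏ t ∈ Finset.range n, (x - (a + t)) := by
  simp [ff, Polynomial.eval_prod]

lemma castChoose (n k : ℕ) :
    (n.choose k : ℚ) * (k.factorial : ℚ) = ∏ t ∈ Finset.range k, ((n : ℚ) - t) := by
  induction k with
  | zero => simp
  | succ k ih =>
    rw [Finset.prod_range_succ, ← ih]
    have h : (n.choose (k+1) : ℚ) * (k+1) = (n.choose k : ℚ) * ((n : ℚ) - k) := by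
      rcases le_or_gt k n with h | h
      · have := Nat.choose_succ_right_eq n k
        have hc : ((n.choose (k+1) * (k+1) : ℕ) : ℚ) = ((n.choose k * (n - k) : ℕ) : ℚ) := by
          exact_mod_cast congrArg (Nat.cast : ℕ → ℚ) this
        push_cast [Nat.cast_sub h] at hc
        exact_mod_cast hc
      · rw [Nat.choose_eq_zero_of_lt h, Nat.choose_eq_zero_of_lt (by omega)]
        simp
    have hfac : ((k+1).factorial : ℚ) = (k+1) * k.factorial := by
      rw [Nat.factorial_succ]; push_cast; ring
    rw [hfac]
    calc (n.choose (k+1) : ℚ) * ((k+1) * k.factorial)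
        = ((n.choose (k+1) : ℚ) * (k+1)) * k.factorial := by ring
      _ = ((n.choose k : ℚ) * ((n:ℚ) - k)) * k.factorial := by rw [h]
      _ = (n.choose k : ℚ) * k.factorial * ((n:ℚ) - k) := by ring

lemma factorial_cast_pos (k : ℕ) : (0:ℚ) < (k.factorial : ℚ) := by
  exact_mod_cast Nat.factorial_pos k

lemma peel1 (x : ℚ) (m : ℕ) :
    ∏ t ∈ Finset.range (m+1), (x - t) = x * ∏ t ∈ Finset.range m, (x - (1+t)) := by
  rw [Finset.prod_range_succ']
  simp only [Nat.cast_add, Nat.cast_one, Nat.cast_zero, sub_zero]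
  rw [mul_comm]
  congr 1
  apply Finset.prod_congr rfl
  intro t _
  push_cast
  ring

lemma peel2 (x : ℚ) (m : ℕ) :
    ∏ t ∈ Finset.range (m+2), (x - t) = x * (x - 1) * ∏ t ∈ Finset.range m, (x - (2+t)) := by
  rw [show m + 2 = (m+1)+1 from rfl, peel1, Finset.prod_range_succ']
  have h : ∀ t ∈ Finset.range m, x - (1 + ((t+1 : ℕ):ℚ)) = x - (2+(t:ℚ)) := by
    intro t _; push_cast; ring
  rw [Finset.prod_congr rfl h]
  push_cast
  ring

lemma eval_bet (r : ℕ) (k : ℕ) (hk : 1 ≤ k) :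
    (r : ℚ) * (bet k).eval (r : ℚ) = (r.choose k : ℚ) := by
  have h := castChoose r k
  obtain ⟨k', rfl⟩ : ∃ k', k = k' + 1 := ⟨k - 1, by omega⟩
  rw [peel1] at h
  have hf : (((k'+1).factorial : ℚ)) ≠ 0 := ne_of_gt (factorial_cast_pos _)
  simp only [bet, Polynomial.eval_mul, Polynomial.eval_C, eval_ff, Nat.add_sub_cancel]
  field_simp
  linarith [h]

lemma eval_qq (r : ℕ) (i : ℕ) (hi : 1 ≤ i) :
    (r : ℚ) * ((r : ℚ) + 1) * (qq i).eval (r : ℚ) = ((r+1).choose (2*i+1) : ℚ) := by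
  have h := castChoose (r+1) (2*i+1)
  have h2 : 2*i+1 = (2*i-1) + 2 := by omega
  rw [h2, peel2] at h
  push_cast at h
  have h3 : ∀ t ∈ Finset.range (2*i-1), ((r:ℚ) + 1 - (2+t)) = (r:ℚ) - (1+t) := by
    intro t _; ring
  rw [Finset.prod_congr rfl h3] at h
  have hf : (((2*i-1+2).factorial : ℚ)) ≠ 0 := ne_of_gt (factorial_cast_pos _)
  simp only [qq, Polynomial.eval_mul, Polynomial.eval_C, eval_ff, h2]
  field_simp
  linarith [h]

lemma eval_bb (r i k : ℕ) (hik : 2*i ≤ r) :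
    (bb i k).eval (r : ℚ) = ((r - 2*i).choose k : ℚ) := by
  have h := castChoose (r - 2*i) k
  have hc : ((r - 2*i : ℕ) : ℚ) = (r : ℚ) - 2*i := by
    push_cast [Nat.cast_sub hik]; ring
  rw [hc] at h
  have hf : ((k.factorial : ℚ)) ≠ 0 := ne_of_gt (factorial_cast_pos k)
  have hprod : ∀ t ∈ Finset.range k, ((r:ℚ) - 2*i - t) = ((r:ℚ) - (2*i + t)) := by
    intro t _; push_cast; ring
  rw [Finset.prod_congr rfl hprod] at h
  simp only [bb, Polynomial.eval_mul, Polynomial.eval_C, eval_ff]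
  push_cast
  field_simp
  linarith [h]

lemma prod_shift_two (m : ℕ) : ∏ t ∈ Finset.range m, ((t:ℚ) + 2) = ((m+1).factorial : ℚ) := by
  induction m with
  | zero => simp
  | succ m ih =>
    rw [Finset.prod_range_succ, ih, show m+1+1 = (m+1)+1 from rfl, Nat.factorial_succ (m+1)]
    push_cast
    ring

lemma eval_neg_ff1 (n : ℕ) : (ff 1 n).eval (-1 : ℚ) = (-1)^n * ((n+1).factorial : ℚ) := by
  rw [eval_ff]
  have h : ∀ t ∈ Finset.range n, (-1 : ℚ) - (1 + t) = (-1) * ((t:ℚ) + 2) := by intro t _; ring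
  rw [Finset.prod_congr rfl h, Finset.prod_mul_distrib, Finset.prod_const, prod_shift_two,
    Finset.card_range]

lemma eval_neg_bet (k : ℕ) (hk : 1 ≤ k) : (bet k).eval (-1 : ℚ) = (-1)^(k-1) := by
  have hf : ((k.factorial : ℚ)) ≠ 0 := ne_of_gt (factorial_cast_pos k)
  have h2 : (k - 1) + 1 = k := by omega
  simp only [bet, Polynomial.eval_mul, Polynomial.eval_C, eval_neg_ff1, h2]
  field_simp

lemma eval_neg_qq (i : ℕ) (hi : 1 ≤ i) :
    (qq i).eval (-1 : ℚ) = -(1 / (2*(i:ℚ)+1)) := by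
  have h2 : (2*i - 1) + 1 = 2*i := by omega
  simp only [qq, Polynomial.eval_mul, Polynomial.eval_C, eval_neg_ff1, h2]
  have hodd : ¬ Even (2*i - 1) := by
    rw [Nat.even_sub (by omega)]
    simp [Nat.even_mul]
  rw [(Nat.not_even_iff_odd.1 hodd).neg_one_pow]
  have hfac : ((2*i+1).factorial : ℚ) = (2*(i:ℚ)+1) * ((2*i).factorial : ℚ) := by
    rw [Nat.factorial_succ]; push_cast; ring
  rw [hfac]
  have h1 : ((2*i).factorial : ℚ) ≠ 0 := ne_of_gt (factorial_cast_pos _)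
  have h3 : (2*(i:ℚ)+1) ≠ 0 := by positivity
  field_simp

lemma eval_neg_bb (i k : ℕ) :
    (bb i k).eval (-1 : ℚ) = (-1)^k * ((2*i+k).choose k : ℚ) := by
  have hf : ((k.factorial : ℚ)) ≠ 0 := ne_of_gt (factorial_cast_pos k)
  simp only [bb, Polynomial.eval_mul, Polynomial.eval_C, eval_ff]
  have h1 : ∀ t ∈ Finset.range k, (-1:ℚ) - (2*(i:ℕ) + (t:ℕ)) = (-1) * (2*(i:ℚ)+1+t) := by
    intro t _; push_cast; ring
  rw [Finset.prod_congr rfl h1, Finset.prod_mul_distrib, Finset.prod_const]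
  have h2 : ∏ t ∈ Finset.range k, ((2*(i:ℚ)+(k:ℚ)) - t) = ∏ t ∈ Finset.range k, (2*(i:ℚ)+1+t) := by
    rw [← Finset.prod_range_reflect (fun t => (2*(i:ℚ)+(k:ℚ)) - t) k]
    apply Finset.prod_congr rfl
    intro j hj
    have hj' : j < k := Finset.mem_range.1 hj
    have hcast : ((k - 1 - j : ℕ) : ℚ) = (k:ℚ) - 1 - j := by
      have : k - 1 - j = k - (1 + j) := by omega
      rw [this, Nat.cast_sub (by omega)]
      push_cast; ring
    simp only [hcast]
    ring
  have hcc := castChoose (2*i+k) k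
  push_cast at hcc
  rw [h2] at hcc
  rw [← hcc]
  field_simp
  rw [Finset.card_range]
  ring

/-! ### The universal coefficient polynomials -/

/-- truncated even series with polynomial coefficients `f j` for `1 ≤ j < g`. -/
def Zof (f : ℕ → Polynomial ℚ) (g : ℕ) : PowerSeries (Polynomial ℚ) :=
  ∑ j ∈ Finset.Ico 1 g, PowerSeries.monomial (2*j) (f j)

/-- the recursion body for the `g`-th coefficient polynomial. -/
def body (g : ℕ) (f : ℕ → Polynomial ℚ) : Polynomial ℚ :=
  -( (∑ k ∈ Finset.Icc 2 g, bet k * PowerSeries.coeff (2*g) ((Zof f g)^k))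
   + ∑ i ∈ Finset.Icc 1 g, qq i *
       ∑ k ∈ Finset.range (g - i + 1),
         bb i k * PowerSeries.coeff (2*(g-i)) ((Zof f g)^k) )

def cvec : ℕ → (ℕ → Polynomial ℚ)
  | 0 => fun _ => 0
  | (g+1) => Function.update (cvec g) g (if g = 0 then 1 else body g (cvec g))

/-- the universal coefficient polynomial `c g` (representing `ã_g(r)·4^g`). -/
def c (g : ℕ) : Polynomial ℚ := cvec (g+1) g

lemma c_zero : c 0 = 1 := by simp [c, cvec]

lemma cvec_eq : ∀ m j, j < m → cvec m j = c j := by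
  intro m
  induction m with
  | zero => intro j hj; omega
  | succ m ih =>
    intro j hj
    rcases Nat.lt_succ_iff_lt_or_eq.1 hj with h | rfl
    · have hne : j ≠ m := by omega
      simp only [cvec, Function.update, hne]
      simpa using ih j h
    · simp [c]

lemma Zof_cvec (g : ℕ) : Zof (cvec g) g = Zof c g := by
  unfold Zof
  apply Finset.sum_congr rfl
  intro j hj
  rw [cvec_eq g j (Finset.mem_Ico.1 hj).2]

lemma c_succ (g : ℕ) (hg : 1 ≤ g) : c g = body g c := by
  obtain ⟨g', rfl⟩ : ∃ g', g = g' + 1 := ⟨g - 1, by omega⟩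
  have h1 : c (g'+1) = body (g'+1) (cvec (g'+1)) := by
    simp [c, cvec]
  rw [h1]
  unfold body
  rw [Zof_cvec]

/-! ### Power series helper lemmas -/

lemma X_pow_dvd_of_order {s : PowerSeries ℚ} (N : ℕ) (h : ∀ m < N, PowerSeries.coeff m s = 0) :
    (PowerSeries.X : PowerSeries ℚ)^N ∣ s :=
  PowerSeries.X_pow_dvd_iff.2 h

lemma coeff_zero_of_dvd {s : PowerSeries ℚ} {N n : ℕ}
    (h : (PowerSeries.X : PowerSeries ℚ)^N ∣ s) (hn : n < N) :
    PowerSeries.coeff n s = 0 :=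
  PowerSeries.X_pow_dvd_iff.1 h n hn

/-- if `s` vanishes in degrees `0` and `1` then `coeff (2m) (s^k) = 0` for `m < k`. -/
lemma coeff_pow_zero_of_even_order {s : PowerSeries ℚ}
    (h0 : PowerSeries.coeff 0 s = 0) (h1 : PowerSeries.coeff 1 s = 0)
    {m k : ℕ} (hmk : m < k) : PowerSeries.coeff (2*m) (s^k) = 0 := by
  have hd : (PowerSeries.X : PowerSeries ℚ)^2 ∣ s := by
    apply X_pow_dvd_of_order
    intro j hj
    interval_cases j <;> assumption
  have : (PowerSeries.X : PowerSeries ℚ)^(2*k) ∣ s^k := by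
    rw [pow_mul]
    exact pow_dvd_pow_of_dvd hd k
  exact coeff_zero_of_dvd this (by omega)

/-- truncation lemma: if `s,t` vanish at `0` and agree below `N`, their `k`-th powers agree
below `N + k - 1`. -/
lemma coeff_pow_congr {s t : PowerSeries ℚ}
    (hs : PowerSeries.coeff 0 s = 0) (ht : PowerSeries.coeff 0 t = 0)
    {N : ℕ} (h : ∀ m < N, PowerSeries.coeff m s = PowerSeries.coeff m t)
    (k n : ℕ) (hn : n + 1 < N + k) :
    PowerSeries.coeff n (s^k) = PowerSeries.coeff n (t^k) := by
  rcases Nat.eq_zero_or_pos k with rfl | hk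
  · rfl
  have hdvd1 : (PowerSeries.X : PowerSeries ℚ)^N ∣ (s - t) := by
    apply X_pow_dvd_of_order
    intro m hm
    rw [map_sub, h m hm, sub_self]
  have hdvd2 : (PowerSeries.X : PowerSeries ℚ)^(k-1) ∣
      ∑ i ∈ Finset.range k, s^i * t^(k-1-i) := by
    apply Finset.dvd_sum
    intro i hi
    have hi' : i < k := Finset.mem_range.1 hi
    have d1 : (PowerSeries.X : PowerSeries ℚ)^i ∣ s^i :=
      pow_dvd_pow_of_dvd (PowerSeries.X_dvd_iff.2 (by simpa using hs)) i
    have d2 : (PowerSeries.X : PowerSeries ℚ)^(k-1-i) ∣ t^(k-1-i) :=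
      pow_dvd_pow_of_dvd (PowerSeries.X_dvd_iff.2 (by simpa using ht)) _
    have : (PowerSeries.X : PowerSeries ℚ)^(k-1) = PowerSeries.X^i * PowerSeries.X^(k-1-i) := by
      rw [← pow_add]
      congr 1
      omega
    rw [this]
    exact mul_dvd_mul d1 d2
  have key : (PowerSeries.X : PowerSeries ℚ)^(N + (k-1)) ∣ (s^k - t^k) := by
    have hgeom := geom_sum₂_mul s t k
    rw [pow_add]
    calc (PowerSeries.X:PowerSeries ℚ)^N * PowerSeries.X^(k-1)
        ∣ (s - t) * ∑ i ∈ Finset.range k, s^i * t^(k-1-i) :=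
          mul_dvd_mul hdvd1 hdvd2
      _ = s^k - t^k := by rw [mul_comm]; exact hgeom
  have := coeff_zero_of_dvd key (show n < N + (k-1) by omega)
  rw [map_sub, sub_eq_zero] at this
  exact this

lemma coeff_Zof (f : ℕ → Polynomial ℚ) (g m : ℕ) :
    PowerSeries.coeff m (Zof f g)
      = if m % 2 = 0 ∧ 1 ≤ m / 2 ∧ m / 2 < g then f (m / 2) else 0 := by
  unfold Zof
  rw [map_sum]
  simp only [PowerSeries.coeff_monomial]
  by_cases h : m % 2 = 0 ∧ 1 ≤ m / 2 ∧ m / 2 < g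
  · rw [if_pos h]
    rw [Finset.sum_eq_single (m/2)]
    · rw [if_pos (by omega)]
    · intro j hj hne
      rw [if_neg (by omega)]
    · intro hnot
      exact absurd (Finset.mem_Ico.2 (by omega)) hnot
  · rw [if_neg h]
    apply Finset.sum_eq_zero
    intro j hj
    rw [Finset.mem_Ico] at hj
    rw [if_neg (by omega)]

lemma sum_range_eq_of_zero {h : ℕ → ℚ} {a b : ℕ}
    (ha : ∀ k, a ≤ k → h k = 0) (hb : ∀ k, b ≤ k → h k = 0) :
    ∑ k ∈ Finset.range a, h k = ∑ k ∈ Finset.range b, h k := by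
  have key : ∀ u v : ℕ, u ≤ v → (∀ k, u ≤ k → h k = 0) →
      ∑ k ∈ Finset.range u, h k = ∑ k ∈ Finset.range v, h k := by
    intro u v huv h0
    apply Finset.sum_subset (Finset.range_subset_range.2 huv)
    intro x _ hnx
    exact h0 x (by simpa using hnx)
  rcases le_total a b with hab | hba
  · exact key a b hab ha
  · exact (key b a hba hb).symm

end StmtAux

namespace StmtAux

lemma coeff_solution (r : ℕ) (hr : 2 ≤ r) (y : PowerSeries ℚ) (hy : isSol r y) :
    ∀ n, PowerSeries.coeff n y
      = if Even n then Polynomial.eval ((r : ℕ) : ℚ) (c (n / 2)) else 0 := by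
  intro n
  induction n using Nat.strong_induction_on with
  | _ n IH =>
  by_cases heven : Even n
  swap
  · rw [if_neg heven]
    exact hy.2.1 n (Nat.not_even_iff_odd.1 heven)
  rw [if_pos heven]
  obtain ⟨g, rfl⟩ : ∃ g, n = 2 * g := by
    obtain ⟨g, hg⟩ := heven; exact ⟨g, by omega⟩
  rw [show 2 * g / 2 = g by omega]
  rcases Nat.eq_zero_or_pos g with rfl | hgpos
  · simpa [c_zero] using hy.1
  -- setup
  set φ : Polynomial ℚ →+* ℚ := Polynomial.evalRingHom ((r : ℕ) : ℚ) with hφdef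
  have hφ : ∀ p : Polynomial ℚ, φ p = Polynomial.eval ((r:ℕ):ℚ) p := fun p => rfl
  set z : PowerSeries ℚ := y - 1 with hzdef
  set Z : PowerSeries (Polynomial ℚ) := Zof c g with hZdef
  set t : ℚ := PowerSeries.coeff (2*g) y with htdef
  have hz0 : PowerSeries.coeff 0 z = 0 := by
    rw [hzdef, map_sub, hy.1, PowerSeries.coeff_one]
    simp
  have hz1 : PowerSeries.coeff 1 z = 0 := by
    rw [hzdef, map_sub, hy.2.1 1 odd_one, PowerSeries.coeff_one]
    simp
  have hcoeffz : ∀ m, 1 ≤ m → PowerSeries.coeff m z = PowerSeries.coeff m y := by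
    intro m hm
    rw [hzdef, map_sub, PowerSeries.coeff_one, if_neg (by omega), sub_zero]
  have hzc0 : PowerSeries.coeff 0 (PowerSeries.map φ Z) = 0 := by
    rw [PowerSeries.coeff_map, hZdef, coeff_Zof, if_neg (by omega), map_zero]
  have hagree : ∀ m < 2*g, PowerSeries.coeff m z = PowerSeries.coeff m (PowerSeries.map φ Z) := by
    intro m hm
    rw [PowerSeries.coeff_map, hZdef, coeff_Zof]
    by_cases hc : m % 2 = 0 ∧ 1 ≤ m / 2 ∧ m / 2 < g
    · rw [if_pos hc]
      have hm1 : 1 ≤ m := by omega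
      have hmeven : Even m := Nat.even_iff.2 hc.1
      rw [hcoeffz m hm1, IH m hm, if_pos hmeven, hφ]
    · rw [if_neg hc, map_zero]
      by_cases hm0 : m = 0
      · rw [hm0]; exact hz0
      · by_cases hme : m % 2 = 0
        · exfalso; exact hc ⟨hme, by omega, by omega⟩
        · rw [hcoeffz m (by omega)]
          exact hy.2.1 m (Nat.odd_iff.2 (by omega))
  have hEtrans : ∀ m k : ℕ, 2*m + 1 < 2*g + k →
      PowerSeries.coeff (2*m) (z^k) = φ (PowerSeries.coeff (2*m) (Z^k)) := by
    intro m k hmk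
    rw [coeff_pow_congr hz0 hzc0 hagree k (2*m) hmk, ← map_pow, PowerSeries.coeff_map]
  have hzeco : ∀ m k : ℕ, m < k → PowerSeries.coeff (2*m) (z^k) = 0 := by
    intro m k hmk
    exact coeff_pow_zero_of_even_order hz0 hz1 hmk
  -- binomial expansion
  have hy_eq : z + 1 = y := by rw [hzdef]; ring
  have hbin : ∀ mm n' : ℕ, PowerSeries.coeff n' (y ^ mm)
      = ∑ k ∈ Finset.range (mm+1), (mm.choose k : ℚ) * PowerSeries.coeff n' (z^k) := by
    intro mm n'
    rw [← hy_eq, add_pow, map_sum]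
    apply Finset.sum_congr rfl
    intro k _
    rw [one_pow, mul_one, ← map_natCast (PowerSeries.C (R := ℚ)) (mm.choose k),
      PowerSeries.coeff_mul_C, mul_comm]
  -- abbreviations
  set A : ℚ := ∑ k ∈ Finset.Icc 2 g, φ (bet k) * φ (PowerSeries.coeff (2*g) (Z^k))
    with hAdef
  set inner : ℕ → ℚ := fun i => ∑ k ∈ Finset.range (g-i+1),
      φ (bb i k) * φ (PowerSeries.coeff (2*(g-i)) (Z^k)) with hInnerdef
  have hr0 : ((r:ℕ):ℚ) ≠ 0 := by
    have : (0:ℚ) < ((r:ℕ):ℚ) := by exact_mod_cast (by omega : 0 < r)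
    linarith
  have hr1 : ((r:ℕ):ℚ) + 1 ≠ 0 := by
    have : (0:ℚ) < ((r:ℕ):ℚ) := by exact_mod_cast (by omega : 0 < r)
    linarith
  -- term identity for k ≥ 2, i = 0 case
  have hterm2 : ∀ k, 2 ≤ k → (r.choose k : ℚ) * PowerSeries.coeff (2*g) (z^k)
      = ((r:ℕ):ℚ) * φ (bet k) * φ (PowerSeries.coeff (2*g) (Z^k)) := by
    intro k hk
    rw [← hEtrans g k (by omega), hφ, eval_bet r k (by omega)]
  -- the i = 0 inner sum
  have hi0 : ∑ k ∈ Finset.range (r+1), (r.choose k : ℚ) * PowerSeries.coeff (2*g) (z^k)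
      = ((r:ℕ):ℚ) * t + ((r:ℕ):ℚ) * A := by
    obtain ⟨r2, hr2⟩ : ∃ r2, r = r2 + 2 := ⟨r - 2, by omega⟩
    subst hr2
    rw [Finset.sum_range_succ', Finset.sum_range_succ']
    have e0 : ((r2+2).choose 0 : ℚ) * PowerSeries.coeff (2*g) (z^0) = 0 := by
      rw [pow_zero, PowerSeries.coeff_one, if_neg (by omega), mul_zero]
    have e1 : ((r2+2).choose (0+1) : ℚ) * PowerSeries.coeff (2*g) (z^(0+1)) = ((r2+2:ℕ):ℚ) * t := by
      rw [pow_one, Nat.choose_one_right, hcoeffz (2*g) (by omega), ← htdef]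
    have e2 : ∑ i ∈ Finset.range (r2+1),
        ((r2+2).choose (i+1+1) : ℚ) * PowerSeries.coeff (2*g) (z^(i+1+1))
        = ((r2+2:ℕ):ℚ) * A := by
      set H : ℕ → ℚ := fun k => ((r2+2:ℕ):ℚ) * φ (bet (k+2))
          * φ (PowerSeries.coeff (2*g) (Z^(k+2))) with hHdef
      have hH : ∀ k : ℕ, ((r2+2).choose (k+2) : ℚ) * PowerSeries.coeff (2*g) (z^(k+2)) = H k :=
        fun k => hterm2 (k+2) (by omega)
      have step1 : ∑ i ∈ Finset.range (r2+1),
          ((r2+2).choose (i+1+1) : ℚ) * PowerSeries.coeff (2*g) (z^(i+1+1))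
          = ∑ i ∈ Finset.range (r2+1), H i := by
        apply Finset.sum_congr rfl
        intro i _
        exact hH i
      rw [step1]
      have step2 : ∑ i ∈ Finset.range (r2+1), H i = ∑ i ∈ Finset.range (g-1), H i := by
        apply sum_range_eq_of_zero
        · intro k hk
          rw [← hH k, Nat.choose_eq_zero_of_lt (by omega), Nat.cast_zero, zero_mul]
        · intro k hk
          rw [← hH k, hzeco g (k+2) (by omega), mul_zero]
      rw [step2, hAdef, Finset.mul_sum, ← Finset.Ico_add_one_right_eq_Icc, Finset.sum_Ico_eq_sum_range]
      rw [show g + 1 - 2 = g - 1 by omega]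
      apply Finset.sum_congr rfl
      intro i _
      rw [hHdef]
      rw [show 2 + i = i + 2 by omega]
      ring
    rw [e2, e1, e0]
    ring
  -- per-i identity for 1 ≤ i ≤ g
  have hterm4 : ∀ i, 1 ≤ i → i ≤ g →
      (((r+1).choose (2*i+1) : ℕ) : ℚ) * PowerSeries.coeff (2*(g-i)) (y^(r-2*i))
        = ((r:ℕ):ℚ) * (((r:ℕ):ℚ)+1) * (φ (qq i) * inner i) := by
    intro i hi1 hig
    by_cases h2i : 2*i ≤ r
    · rw [hbin (r-2*i) (2*(g-i))]
      have hterm3 : ∀ k : ℕ, ((r-2*i).choose k : ℚ) * PowerSeries.coeff (2*(g-i)) (z^k)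
          = φ (bb i k) * φ (PowerSeries.coeff (2*(g-i)) (Z^k)) := by
        intro k
        rw [← hEtrans (g-i) k (by omega), hφ, eval_bb r i k h2i]
      have hin : ∑ k ∈ Finset.range (r-2*i+1),
          ((r-2*i).choose k : ℚ) * PowerSeries.coeff (2*(g-i)) (z^k) = inner i := by
        rw [Finset.sum_congr rfl (fun k _ => hterm3 k), hInnerdef]
        apply sum_range_eq_of_zero
        · intro k hk
          rw [← hterm3 k, Nat.choose_eq_zero_of_lt (by omega), Nat.cast_zero, zero_mul]
        · intro k hk
          rw [← hterm3 k, hzeco (g-i) k (by omega), mul_zero]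
      rw [hin, hφ, ← eval_qq r i hi1]
      ring
    · have hq := eval_qq r i hi1
      rw [Nat.choose_eq_zero_of_lt (show r+1 < 2*i+1 by omega)] at hq ⊢
      rw [Nat.cast_zero] at hq ⊢
      rw [zero_mul, hφ]
      linear_combination (-(inner i)) * hq
  -- extract coefficient 2g from the equation
  have hco := congrArg (PowerSeries.coeff (2*g)) hy.2.2
  rw [map_sum, PowerSeries.coeff_C, if_neg (by omega)] at hco
  have hterm1 : ∀ i ∈ Finset.range (r/2+1),
      PowerSeries.coeff (2*g)
        (PowerSeries.C (R := ℚ) ((Nat.choose (r+1) (2*i+1) : ℕ) : ℚ) * PowerSeries.X^(2*i) * y^(r-2*i))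
        = (((r+1).choose (2*i+1) : ℕ) : ℚ)
            * (if i ≤ g then PowerSeries.coeff (2*(g-i)) (y^(r-2*i)) else 0) := by
    intro i _
    rw [mul_assoc, PowerSeries.coeff_C_mul, PowerSeries.coeff_X_pow_mul']
    congr 1
    by_cases hig : i ≤ g
    · rw [if_pos (by omega : 2*i ≤ 2*g), if_pos hig, show 2*g - 2*i = 2*(g-i) by omega]
    · rw [if_neg (by omega), if_neg hig]
  rw [Finset.sum_congr rfl hterm1, Finset.sum_range_succ'] at hco
  set S : ℚ := ∑ i ∈ Finset.Icc 1 g, φ (qq i) * inner i with hSdef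
  have h1 : ∑ i ∈ Finset.range (r/2),
      (((r+1).choose (2*(i+1)+1) : ℕ) : ℚ)
        * (if i+1 ≤ g then PowerSeries.coeff (2*(g-(i+1))) (y^(r-2*(i+1))) else 0)
      = ((r:ℕ):ℚ) * (((r:ℕ):ℚ)+1) * S := by
    set H : ℕ → ℚ := fun i => if i+1 ≤ g
        then ((r:ℕ):ℚ) * (((r:ℕ):ℚ)+1) * (φ (qq (i+1)) * inner (i+1)) else 0 with hHdef
    have step1 : ∑ i ∈ Finset.range (r/2),
        (((r+1).choose (2*(i+1)+1) : ℕ) : ℚ)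
          * (if i+1 ≤ g then PowerSeries.coeff (2*(g-(i+1))) (y^(r-2*(i+1))) else 0)
        = ∑ i ∈ Finset.range (r/2), H i := by
      apply Finset.sum_congr rfl
      intro i _
      simp only [hHdef]
      by_cases hig : i+1 ≤ g
      · rw [if_pos hig, if_pos hig]
        exact hterm4 (i+1) (by omega) hig
      · rw [if_neg hig, if_neg hig, mul_zero]
    rw [step1]
    have step2 : ∑ i ∈ Finset.range (r/2), H i = ∑ i ∈ Finset.range g, H i := by
      apply sum_range_eq_of_zero
      · intro k hk
        simp only [hHdef]
        by_cases hkg : k+1 ≤ g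
        · rw [if_pos hkg]
          have hq := eval_qq r (k+1) (by omega)
          rw [Nat.choose_eq_zero_of_lt (show r+1 < 2*(k+1)+1 by omega), Nat.cast_zero] at hq
          rw [hφ]
          linear_combination (inner (k+1)) * hq
        · rw [if_neg hkg]
      · intro k hk
        simp only [hHdef]
        rw [if_neg (by omega)]
    rw [step2, hSdef, Finset.mul_sum, ← Finset.Ico_add_one_right_eq_Icc, Finset.sum_Ico_eq_sum_range]
    rw [show g + 1 - 1 = g by omega]
    apply Finset.sum_congr rfl
    intro i hi
    simp only [hHdef]
    rw [show 1 + i = i + 1 by omega, if_pos (by rw [Finset.mem_range] at hi; omega)]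
  have h0 : (((r+1).choose (2*0+1) : ℕ) : ℚ)
      * (if 0 ≤ g then PowerSeries.coeff (2*(g-0)) (y^(r-2*0)) else 0)
      = (((r:ℕ):ℚ)+1) * (((r:ℕ):ℚ) * t + ((r:ℕ):ℚ) * A) := by
    rw [if_pos (by omega), show 2*0+1 = 1 by rfl, Nat.choose_one_right,
      Nat.sub_zero, show r - 2*0 = r by omega, hbin r (2*g), hi0]
    push_cast
    ring
  have hcg : φ (c g) = -(A + S) := by
    rw [c_succ g hgpos]
    unfold body
    rw [map_neg, map_add, map_sum, map_sum]
    congr 1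
    congr 1
    · rw [hAdef]
      apply Finset.sum_congr rfl
      intro k _
      rw [map_mul, ← hZdef]
    · rw [hSdef]
      apply Finset.sum_congr rfl
      intro i _
      rw [map_mul, map_sum, hInnerdef]
      congr 1
      apply Finset.sum_congr rfl
      intro k _
      rw [map_mul, ← hZdef]
  have hkey : ((r:ℕ):ℚ) * (((r:ℕ):ℚ)+1) * (t - φ (c g)) = 0 := by
    rw [hcg]
    linear_combination hco - h1 - h0
  have hfin : t - φ (c g) = 0 := by
    rcases mul_eq_zero.1 hkey with h | h
    · rcases mul_eq_zero.1 h with h' | h'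
      · exact absurd h' hr0
      · exact absurd h' hr1
    · exact h
  have : t = φ (c g) := by linarith
  rw [this]
  exact hφ (c g)

/-! ### The Bernoulli side -/

def W : PowerSeries ℚ := PowerSeries.rescale 2 (bernoulliPowerSeries ℚ) + PowerSeries.X

def E : PowerSeries ℚ := PowerSeries.rescale 2 (PowerSeries.exp ℚ)

lemma coeff_W (n : ℕ) :
    PowerSeries.coeff n W = 2^n * bernoulli n / n.factorial + (if n = 1 then 1 else 0) := by
  unfold W
  rw [map_add, PowerSeries.coeff_rescale, PowerSeries.coeff_X]
  unfold bernoulliPowerSeries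
  rw [PowerSeries.coeff_mk]
  simp only [Algebra.algebraMap_self_apply]
  ring

lemma coeff_W_even (g : ℕ) :
    PowerSeries.coeff (2*g) W = 4^g * bernoulli (2*g) / (2*g).factorial := by
  rw [coeff_W, if_neg (by omega), add_zero, pow_mul]
  norm_num

lemma coeff_W_zero : PowerSeries.coeff 0 W = 1 := by
  have := coeff_W_even 0
  simpa using this

lemma coeff_W_one : PowerSeries.coeff 1 W = 0 := by
  rw [coeff_W, if_pos rfl, bernoulli_one]
  norm_num

lemma coeff_W_odd (n : ℕ) (h : Odd n) : PowerSeries.coeff n W = 0 := by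
  rcases eq_or_ne n 1 with rfl | hn
  · exact coeff_W_one
  · rw [coeff_W, if_neg hn, bernoulli_eq_bernoulli'_of_ne_one hn,
      bernoulli'_eq_zero_of_odd h (by rcases h with ⟨m, rfl⟩; omega)]
    norm_num

lemma constW : PowerSeries.constantCoeff (R := ℚ) W = 1 := by
  rw [← PowerSeries.coeff_zero_eq_constantCoeff_apply]
  exact coeff_W_zero

lemma constW_ne : PowerSeries.constantCoeff (R := ℚ) W ≠ 0 := by rw [constW]; norm_num

lemma constE : PowerSeries.constantCoeff (R := ℚ) E = 1 := by
  rw [← PowerSeries.coeff_zero_eq_constantCoeff_apply]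
  unfold E
  rw [PowerSeries.coeff_rescale]
  simp [PowerSeries.coeff_exp]

lemma hWE : W * (E - 1) = PowerSeries.X * (E + 1) := by
  have hB := congrArg (PowerSeries.rescale (2:ℚ)) (bernoulliPowerSeries_mul_exp_sub_one ℚ)
  rw [map_mul, map_sub, map_one, PowerSeries.rescale_X] at hB
  have hC2 : (PowerSeries.C (R := ℚ)) 2 = (2 : PowerSeries ℚ) := map_ofNat _ 2
  rw [hC2] at hB
  unfold W E at *
  linear_combination hB

def U : PowerSeries ℚ := PowerSeries.X * W⁻¹

lemma constU : PowerSeries.constantCoeff (R := ℚ) U = 0 := by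
  unfold U
  rw [map_mul, PowerSeries.constantCoeff_X, zero_mul]

lemma hU_mul : U * (E + 1) = E - 1 := by
  have h1 : W⁻¹ * W = 1 := PowerSeries.inv_mul_cancel W constW_ne
  calc U * (E + 1) = W⁻¹ * (PowerSeries.X * (E + 1)) := by unfold U; ring
    _ = W⁻¹ * (W * (E - 1)) := by rw [hWE]
    _ = (W⁻¹ * W) * (E - 1) := by ring
    _ = E - 1 := by rw [h1, one_mul]

lemma hdE : PowerSeries.derivative ℚ E = 2 * E := by
  have h2 : (2 : PowerSeries ℚ) = PowerSeries.C (R := ℚ) 2 := (map_ofNat _ 2).symm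
  ext n
  rw [PowerSeries.coeff_derivative, h2, PowerSeries.coeff_C_mul]
  unfold E
  rw [PowerSeries.coeff_rescale, PowerSeries.coeff_rescale, PowerSeries.coeff_exp,
    PowerSeries.coeff_exp]
  have h1 : ((n+1).factorial : ℚ) = ((n:ℚ)+1) * (n.factorial : ℚ) := by
    rw [Nat.factorial_succ]; push_cast; ring
  have h2' : ((n.factorial : ℚ)) ≠ 0 := ne_of_gt (factorial_cast_pos n)
  have h3 : ((n:ℚ)+1) ≠ 0 := by positivity
  simp only [Algebra.algebraMap_self_apply] at *
  rw [h1]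
  field_simp
  ring

lemma hE1_ne : (E + 1) ≠ 0 := by
  intro h
  have := congrArg (PowerSeries.constantCoeff (R := ℚ)) h
  rw [map_add, constE, map_one, map_zero] at this
  norm_num at this

lemma hdU : PowerSeries.derivative ℚ U = 1 - U^2 := by
  have hd := congrArg (⇑(PowerSeries.derivative ℚ)) hU_mul
  rw [Derivation.leibniz, smul_eq_mul, smul_eq_mul, map_sub, map_add,
    Derivation.map_one_eq_zero, hdE] at hd
  have key : (PowerSeries.derivative ℚ U - (1 - U^2)) * (E+1)^2 = 0 := by
    have h1 : PowerSeries.derivative ℚ U * (E+1)^2 = 4*E := by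
      linear_combination (E+1) * hd - 2*E*hU_mul
    have h2 : (1 - U^2)*(E+1)^2 = 4*E := by
      linear_combination (-(U*(E+1)+(E-1))) * hU_mul
    linear_combination h1 - h2
  rcases mul_eq_zero.1 key with h | h
  · exact sub_eq_zero.1 h
  · exact absurd h (pow_ne_zero 2 hE1_ne)

lemma artanh_id (g : ℕ) (hg : 1 ≤ g) :
    ∑ i ∈ Finset.range (g+1), (1/(2*(i:ℚ)+1)) * PowerSeries.coeff (2*g+1) (U^(2*i+1)) = 0 := by
  have h2g : ((2*g+1 : ℕ) : ℚ) ≠ 0 := by positivity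
  have key : ((2*g+1:ℕ):ℚ) * (∑ i ∈ Finset.range (g+1),
      (1/(2*(i:ℚ)+1)) * PowerSeries.coeff (2*g+1) (U^(2*i+1))) = 0 := by
    rw [Finset.mul_sum]
    have hterm : ∀ i ∈ Finset.range (g+1),
        ((2*g+1:ℕ):ℚ) * ((1/(2*(i:ℚ)+1)) * PowerSeries.coeff (2*g+1) (U^(2*i+1)))
        = PowerSeries.coeff (2*g) (U^(2*i)) - PowerSeries.coeff (2*g) (U^(2*i+2)) := by
      intro i _
      have hD : PowerSeries.coeff (2*g) (PowerSeries.derivative ℚ (U^(2*i+1)))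
          = PowerSeries.coeff (2*g+1) (U^(2*i+1)) * ((2*g:ℚ)+1) := by
        rw [PowerSeries.coeff_derivative]
        push_cast
        ring
      have hL : PowerSeries.derivative ℚ (U^(2*i+1))
          = ((2*i+1 : ℕ) : PowerSeries ℚ) * (U^(2*i) - U^(2*i+2)) := by
        rw [Derivation.leibniz_pow, hdU, smul_eq_mul, nsmul_eq_mul,
          show 2*i+1-1 = 2*i from rfl]
        ring
      rw [hL, ← map_natCast (PowerSeries.C (R := ℚ)) (2*i+1), PowerSeries.coeff_C_mul, map_sub] at hD
      have hne : (2*(i:ℚ)+1) ≠ 0 := by positivity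
      have hrw : PowerSeries.coeff (2*g) (U^(2*i)) - PowerSeries.coeff (2*g) (U^(2*i+2))
          = (1/(2*(i:ℚ)+1)) * (((2*i+1:ℕ):ℚ) * (PowerSeries.coeff (2*g) (U^(2*i))
              - PowerSeries.coeff (2*g) (U^(2*i+2)))) := by
        push_cast
        field_simp
      rw [hrw, hD]
      push_cast
      ring
    rw [Finset.sum_congr rfl hterm]
    have hshape : ∀ i : ℕ, PowerSeries.coeff (2*g) (U^(2*i+2))
        = PowerSeries.coeff (2*g) (U^(2*(i+1))) := by
      intro i
      rw [show 2*(i+1) = 2*i+2 by omega]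
    rw [Finset.sum_congr rfl (fun i _ => by rw [hshape i])]
    rw [Finset.sum_range_sub' (fun i => PowerSeries.coeff (2*g) (U^(2*i)))]
    have hz0 : PowerSeries.coeff (2*g) (U^(2*0)) = 0 := by
      norm_num [PowerSeries.coeff_one]
      omega
    have hz1 : PowerSeries.coeff (2*g) (U^(2*(g+1))) = 0 := by
      apply coeff_zero_of_dvd (N := 2*(g+1))
      · exact pow_dvd_pow_of_dvd (PowerSeries.X_dvd_iff.2 constU) _
      · omega
    rw [hz0, hz1, sub_zero]
  rcases mul_eq_zero.1 key with h | h
  · exact absurd h h2g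
  · exact h

/-! ### Neumann series lemma -/

lemma NL_aux (s : PowerSeries ℚ) (n : ℕ) (j : ℕ) :
    ∃ RR : PowerSeries ℚ,
      (1+s)^(j+1) * (∑ k ∈ Finset.range (n+1),
          PowerSeries.C (R := ℚ) ((-1)^k * ((j+k).choose k : ℚ)) * s^k)
        = 1 + s^(n+1) * RR := by
  induction j with
  | zero =>
    refine ⟨((-1:PowerSeries ℚ))^n, ?_⟩
    have hT : ∑ k ∈ Finset.range (n+1), PowerSeries.C (R := ℚ) ((-1)^k * ((0+k).choose k : ℚ)) * s^k
        = ∑ k ∈ Finset.range (n+1), (-s)^k := by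
      apply Finset.sum_congr rfl
      intro k _
      rw [Nat.zero_add, Nat.choose_self]
      rw [Nat.cast_one, mul_one, map_pow, map_neg, map_one, neg_pow]
      ring
    rw [hT, pow_one]
    have hg := geom_sum_mul (-s) (n+1)
    have hpow : (-s)^(n+1) = (-1:PowerSeries ℚ)^(n+1) * s^(n+1) := by rw [neg_pow]
    rw [hpow] at hg
    linear_combination (-1 : PowerSeries ℚ) * hg
  | succ j ih =>
    obtain ⟨RR, hRR⟩ := ih
    refine ⟨RR + PowerSeries.C (R := ℚ) ((-1)^n * ((j+1+n).choose n : ℚ)) * (1+s)^(j+1), ?_⟩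
    have hstep : (1+s) * (∑ k ∈ Finset.range (n+1),
          PowerSeries.C (R := ℚ) ((-1)^k * ((j+1+k).choose k : ℚ)) * s^k)
        = (∑ k ∈ Finset.range (n+1), PowerSeries.C (R := ℚ) ((-1)^k * ((j+k).choose k : ℚ)) * s^k)
          + PowerSeries.C (R := ℚ) ((-1)^n * ((j+1+n).choose n : ℚ)) * s^(n+1) := by
      rw [add_mul, one_mul, Finset.mul_sum]
      rw [Finset.sum_range_succ'
        (fun k => PowerSeries.C (R := ℚ) ((-1)^k * ((j+1+k).choose k : ℚ)) * s^k) n]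
      rw [Finset.sum_range_succ
        (fun k => s * (PowerSeries.C (R := ℚ) ((-1)^k * ((j+1+k).choose k : ℚ)) * s^k)) n]
      rw [Finset.sum_range_succ'
        (fun k => PowerSeries.C (R := ℚ) ((-1)^k * ((j+k).choose k : ℚ)) * s^k) n]
      have hcomb : ∀ k ∈ Finset.range n,
          PowerSeries.C (R := ℚ) ((-1)^(k+1) * ((j+1+(k+1)).choose (k+1) : ℚ)) * s^(k+1)
            + s * (PowerSeries.C (R := ℚ) ((-1)^k * ((j+1+k).choose k : ℚ)) * s^k)
          = PowerSeries.C (R := ℚ) ((-1)^(k+1) * ((j+(k+1)).choose (k+1) : ℚ)) * s^(k+1) := by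
        intro k _
        have hpas : (j+1+(k+1)).choose (k+1) = (j+1+k).choose k + (j+(k+1)).choose (k+1) := by
          rw [show j+1+(k+1) = (j+k+1)+1 by omega]
          rw [Nat.choose_succ_succ (j+k+1) k]
          congr 2 <;> omega
        have hpasS : ((((j+1+(k+1)).choose (k+1) : ℕ)) : PowerSeries ℚ)
            = (((j+1+k).choose k : ℕ) : PowerSeries ℚ)
              + (((j+(k+1)).choose (k+1) : ℕ) : PowerSeries ℚ) := by
          rw [hpas]
          push_cast
          ring
        simp only [map_mul, map_pow, map_neg, map_one, map_natCast]
        linear_combination ((-1 : PowerSeries ℚ))^(k+1) * s^(k+1) * hpasS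
      have hsum : (∑ k ∈ Finset.range n,
            PowerSeries.C (R := ℚ) ((-1)^(k+1) * ((j+1+(k+1)).choose (k+1) : ℚ)) * s^(k+1))
          + ∑ k ∈ Finset.range n, s * (PowerSeries.C (R := ℚ) ((-1)^k * ((j+1+k).choose k : ℚ)) * s^k)
          = ∑ k ∈ Finset.range n,
            PowerSeries.C (R := ℚ) ((-1)^(k+1) * ((j+(k+1)).choose (k+1) : ℚ)) * s^(k+1) := by
        rw [← Finset.sum_add_distrib]
        exact Finset.sum_congr rfl hcomb
      simp only [pow_zero, one_mul, Nat.choose_zero_right, Nat.cast_one, map_one, mul_one]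
        at hsum ⊢
      linear_combination hsum
    calc (1+s)^(j+1+1) * (∑ k ∈ Finset.range (n+1),
            PowerSeries.C (R := ℚ) ((-1)^k * ((j+1+k).choose k : ℚ)) * s^k)
        = (1+s)^(j+1) * ((1+s) * (∑ k ∈ Finset.range (n+1),
            PowerSeries.C (R := ℚ) ((-1)^k * ((j+1+k).choose k : ℚ)) * s^k)) := by ring
      _ = 1 + s^(n+1) * (RR + PowerSeries.C (R := ℚ) ((-1)^n * ((j+1+n).choose n : ℚ)) * (1+s)^(j+1)) := by
          rw [hstep]
          linear_combination hRR

lemma NL (s : PowerSeries ℚ) (hs : PowerSeries.coeff 0 s = 0)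
    (hcs : PowerSeries.constantCoeff (R := ℚ) (1+s) ≠ 0) (j n : ℕ) :
    PowerSeries.coeff n (((1+s)⁻¹)^(j+1))
      = ∑ k ∈ Finset.range (n+1), (-1)^k * ((j+k).choose k : ℚ) * PowerSeries.coeff n (s^k) := by
  obtain ⟨RR, hRR⟩ := NL_aux s n j
  have hV : ((1+s)⁻¹)^(j+1) * (1+s)^(j+1) = 1 := by
    rw [← mul_pow, PowerSeries.inv_mul_cancel _ hcs, one_pow]
  have hT : (∑ k ∈ Finset.range (n+1), PowerSeries.C (R := ℚ) ((-1)^k * ((j+k).choose k : ℚ)) * s^k)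
      = ((1+s)⁻¹)^(j+1) + ((1+s)⁻¹)^(j+1) * (s^(n+1) * RR) := by
    calc (∑ k ∈ Finset.range (n+1), PowerSeries.C (R := ℚ) ((-1)^k * ((j+k).choose k : ℚ)) * s^k)
        = ((1+s)⁻¹)^(j+1) * ((1+s)^(j+1) * (∑ k ∈ Finset.range (n+1),
            PowerSeries.C (R := ℚ) ((-1)^k * ((j+k).choose k : ℚ)) * s^k)) := by
          rw [← mul_assoc, hV, one_mul]
      _ = ((1+s)⁻¹)^(j+1) * (1 + s^(n+1) * RR) := by rw [hRR]
      _ = ((1+s)⁻¹)^(j+1) + ((1+s)⁻¹)^(j+1) * (s^(n+1) * RR) := by ring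
  have hzero : PowerSeries.coeff n (((1+s)⁻¹)^(j+1) * (s^(n+1) * RR)) = 0 := by
    apply coeff_zero_of_dvd (N := n+1) _ (by omega)
    have hXs : (PowerSeries.X : PowerSeries ℚ)^(n+1) ∣ s^(n+1) :=
      pow_dvd_pow_of_dvd (PowerSeries.X_dvd_iff.2 (by simpa using hs)) _
    exact Dvd.dvd.mul_left (Dvd.dvd.mul_right hXs RR) _
  have := congrArg (PowerSeries.coeff n) hT
  rw [map_add, hzero, add_zero, map_sum] at this
  rw [← this]
  apply Finset.sum_congr rfl
  intro k _
  rw [PowerSeries.coeff_C_mul]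

lemma c_eval_neg : ∀ g : ℕ, (c g).eval (-1 : ℚ) = PowerSeries.coeff (2*g) W := by
  intro g
  induction g using Nat.strong_induction_on with
  | _ g IH =>
  rcases Nat.eq_zero_or_pos g with rfl | hgpos
  · rw [c_zero, Polynomial.eval_one, show 2*0 = 0 by omega, coeff_W_zero]
  set ψ : Polynomial ℚ →+* ℚ := Polynomial.evalRingHom (-1 : ℚ) with hψdef
  have hψ : ∀ p : Polynomial ℚ, ψ p = p.eval (-1:ℚ) := fun p => rfl
  set sW : PowerSeries ℚ := W - 1 with hsWdef
  set Z : PowerSeries (Polynomial ℚ) := Zof c g with hZdef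
  have hs0 : PowerSeries.coeff 0 sW = 0 := by
    rw [hsWdef, map_sub, coeff_W_zero, PowerSeries.coeff_one, if_pos rfl, sub_self]
  have hs1 : PowerSeries.coeff 1 sW = 0 := by
    rw [hsWdef, map_sub, coeff_W_one, PowerSeries.coeff_one, if_neg (by omega), sub_zero]
  have hW1s : (1 : PowerSeries ℚ) + sW = W := by rw [hsWdef]; ring
  have hconst : PowerSeries.constantCoeff (R := ℚ) (1 + sW) ≠ 0 := by rw [hW1s]; exact constW_ne
  have hcoeffs : ∀ m, 1 ≤ m → PowerSeries.coeff m sW = PowerSeries.coeff m W := by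
    intro m hm
    rw [hsWdef, map_sub, PowerSeries.coeff_one, if_neg (by omega), sub_zero]
  have hzc0 : PowerSeries.coeff 0 (PowerSeries.map ψ Z) = 0 := by
    rw [PowerSeries.coeff_map, hZdef, coeff_Zof, if_neg (by omega), map_zero]
  have hagree : ∀ m < 2*g,
      PowerSeries.coeff m (PowerSeries.map ψ Z) = PowerSeries.coeff m sW := by
    intro m hm
    rw [PowerSeries.coeff_map, hZdef, coeff_Zof]
    by_cases hc : m % 2 = 0 ∧ 1 ≤ m / 2 ∧ m / 2 < g
    · rw [if_pos hc, hψ, IH (m/2) (by omega), hcoeffs m (by omega),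
        show 2*(m/2) = m by omega]
    · rw [if_neg hc, map_zero]
      by_cases hm0 : m = 0
      · rw [hm0, hs0]
      · by_cases hme : m % 2 = 0
        · exfalso; exact hc ⟨hme, by omega, by omega⟩
        · rw [hcoeffs m (by omega), coeff_W_odd m (Nat.odd_iff.2 (by omega))]
  have hEtrans : ∀ m k : ℕ, 2*m + 1 < 2*g + k →
      ψ (PowerSeries.coeff (2*m) (Z^k)) = PowerSeries.coeff (2*m) (sW^k) := by
    intro m k hmk
    rw [← PowerSeries.coeff_map, map_pow]
    exact coeff_pow_congr hzc0 hs0 hagree k (2*m) hmk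
  have hzeco : ∀ m k : ℕ, m < k → PowerSeries.coeff (2*m) (sW^k) = 0 := by
    intro m k hmk
    exact coeff_pow_zero_of_even_order hs0 hs1 hmk
  have hNLW : ∀ j m : ℕ, PowerSeries.coeff (2*m) ((W⁻¹)^(j+1))
      = ∑ k ∈ Finset.range (2*m+1),
          (-1)^k * ((j+k).choose k : ℚ) * PowerSeries.coeff (2*m) (sW^k) := by
    intro j m
    have h := NL sW hs0 hconst j (2*m)
    rw [hW1s] at h
    exact h
  -- the recursion evaluated at -1
  have hrec : ψ (c g) = -( (∑ k ∈ Finset.Icc 2 g,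
        ψ (bet k) * ψ (PowerSeries.coeff (2*g) (Z^k)))
      + ∑ i ∈ Finset.Icc 1 g, ψ (qq i) * ∑ k ∈ Finset.range (g-i+1),
          ψ (bb i k) * ψ (PowerSeries.coeff (2*(g-i)) (Z^k)) ) := by
    rw [c_succ g hgpos]
    unfold body
    rw [map_neg, map_add, map_sum, map_sum]
    congr 1
    congr 1
    · apply Finset.sum_congr rfl
      intro k _
      rw [map_mul, ← hZdef]
    · apply Finset.sum_congr rfl
      intro i _
      rw [map_mul, map_sum]
      congr 1
      apply Finset.sum_congr rfl
      intro k _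
      rw [map_mul, ← hZdef]
  -- first sum
  have hterm1 : ∑ k ∈ Finset.Icc 2 g,
      ψ (bet k) * ψ (PowerSeries.coeff (2*g) (Z^k))
      = ∑ k ∈ Finset.Icc 2 g, -((-1)^k * PowerSeries.coeff (2*g) (sW^k)) := by
    apply Finset.sum_congr rfl
    intro k hk
    rw [Finset.mem_Icc] at hk
    rw [hψ, eval_neg_bet k (by omega), hEtrans g k (by omega)]
    obtain ⟨k1, rfl⟩ : ∃ k1, k = k1 + 1 := ⟨k - 1, by omega⟩
    rw [Nat.add_sub_cancel, pow_succ]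
    ring
  have hsum1 : ∑ k ∈ Finset.Icc 2 g, (-1 : ℚ)^k * PowerSeries.coeff (2*g) (sW^k)
      = PowerSeries.coeff (2*g) (W⁻¹) + PowerSeries.coeff (2*g) W := by
    have h0 := hNLW 0 g
    rw [pow_one] at h0
    have hF : ∀ k : ℕ, (-1:ℚ)^k * ((0+k).choose k : ℚ) * PowerSeries.coeff (2*g) (sW^k)
        = (-1:ℚ)^k * PowerSeries.coeff (2*g) (sW^k) := by
      intro k
      rw [Nat.zero_add, Nat.choose_self, Nat.cast_one, mul_one]
    rw [Finset.sum_congr rfl (fun k _ => hF k)] at h0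
    have hshrink : ∑ k ∈ Finset.range (2*g+1), (-1:ℚ)^k * PowerSeries.coeff (2*g) (sW^k)
        = ∑ k ∈ Finset.range (g+1), (-1:ℚ)^k * PowerSeries.coeff (2*g) (sW^k) := by
      apply sum_range_eq_of_zero
      · intro k hk
        rw [hzeco g k (by omega), mul_zero]
      · intro k hk
        rw [hzeco g k (by omega), mul_zero]
    rw [hshrink] at h0
    obtain ⟨g1, rfl⟩ : ∃ g1, g = g1 + 1 := ⟨g - 1, by omega⟩
    rw [Finset.sum_range_succ'
      (fun k => (-1:ℚ)^k * PowerSeries.coeff (2*(g1+1)) (sW^k)) (g1+1)] at h0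
    rw [Finset.sum_range_succ'
      (fun k => (-1:ℚ)^(k+1) * PowerSeries.coeff (2*(g1+1)) (sW^(k+1))) g1] at h0
    have hk0 : (-1:ℚ)^0 * PowerSeries.coeff (2*(g1+1)) (sW^0) = 0 := by
      rw [pow_zero, pow_zero, one_mul, PowerSeries.coeff_one, if_neg (by omega)]
    have hk1 : (-1:ℚ)^(0+1) * PowerSeries.coeff (2*(g1+1)) (sW^(0+1)) = 
        -PowerSeries.coeff (2*(g1+1)) W := by
      rw [pow_one, pow_one, hcoeffs _ (by omega)]
      ring
    rw [hk0, hk1, add_zero] at h0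
    have hIcc : ∑ k ∈ Finset.Icc 2 (g1+1), (-1:ℚ)^k * PowerSeries.coeff (2*(g1+1)) (sW^k)
        = ∑ k ∈ Finset.range g1, (-1:ℚ)^(k+1+1) * PowerSeries.coeff (2*(g1+1)) (sW^(k+1+1)) := by
      rw [← Finset.Ico_add_one_right_eq_Icc, Finset.sum_Ico_eq_sum_range]
      rw [show g1 + 1 + 1 - 2 = g1 by omega]
      apply Finset.sum_congr rfl
      intro i _
      rw [show 2 + i = i + 1 + 1 by omega]
    rw [hIcc]
    linarith [h0]
  -- second sum
  have hP : ∀ i : ℕ, i ≤ g → PowerSeries.coeff (2*(g-i)) ((W⁻¹)^(2*i+1))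
      = PowerSeries.coeff (2*g+1) (U^(2*i+1)) := by
    intro i hig
    have hUpow : U^(2*i+1) = PowerSeries.X^(2*i+1) * (W⁻¹)^(2*i+1) := by
      unfold U; rw [mul_pow]
    rw [hUpow, PowerSeries.coeff_X_pow_mul', if_pos (by omega),
      show 2*g+1 - (2*i+1) = 2*(g-i) by omega]
  have hterm2 : ∀ i, 1 ≤ i → i ≤ g →
      ∑ k ∈ Finset.range (g-i+1),
        ψ (bb i k) * ψ (PowerSeries.coeff (2*(g-i)) (Z^k))
      = PowerSeries.coeff (2*g+1) (U^(2*i+1)) := by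
    intro i hi1 hig
    rw [← hP i hig, hNLW (2*i) (g-i)]
    have hG : ∀ k : ℕ, ψ (bb i k) * ψ (PowerSeries.coeff (2*(g-i)) (Z^k))
        = (-1:ℚ)^k * ((2*i+k).choose k : ℚ) * PowerSeries.coeff (2*(g-i)) (sW^k) := by
      intro k
      rw [hψ, eval_neg_bb i k, hEtrans (g-i) k (by omega)]
    rw [Finset.sum_congr rfl (fun k _ => hG k)]
    apply sum_range_eq_of_zero
    · intro k hk
      rw [hzeco (g-i) k (by omega), mul_zero]
    · intro k hk
      rw [hzeco (g-i) k (by omega), mul_zero]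
  -- assemble
  rw [← hψ (c g), hrec, hterm1]
  have hqvals : ∑ i ∈ Finset.Icc 1 g, ψ (qq i) * ∑ k ∈ Finset.range (g-i+1),
      ψ (bb i k) * ψ (PowerSeries.coeff (2*(g-i)) (Z^k))
      = ∑ i ∈ Finset.Icc 1 g, -((1/(2*(i:ℚ)+1)) * PowerSeries.coeff (2*g+1) (U^(2*i+1))) := by
    apply Finset.sum_congr rfl
    intro i hi
    rw [Finset.mem_Icc] at hi
    rw [hterm2 i hi.1 hi.2, hψ, eval_neg_qq i hi.1]
    ring
  rw [hqvals]
  have hart := artanh_id g hgpos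
  rw [Finset.sum_range_succ'
    (fun i => (1/(2*(i:ℚ)+1)) * PowerSeries.coeff (2*g+1) (U^(2*i+1))) g] at hart
  have hi0' : (1/(2*((0:ℕ):ℚ)+1)) * PowerSeries.coeff (2*g+1) (U^(2*0+1))
      = PowerSeries.coeff (2*g) (W⁻¹) := by
    rw [← hP 0 (by omega)]
    norm_num
  rw [hi0'] at hart
  have hG2 : ∑ i ∈ Finset.Icc 1 g, (1/(2*(i:ℚ)+1)) * PowerSeries.coeff (2*g+1) (U^(2*i+1))
      = ∑ i ∈ Finset.range g,
          (1/(2*((i+1:ℕ):ℚ)+1)) * PowerSeries.coeff (2*g+1) (U^(2*(i+1)+1)) := by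
    rw [← Finset.Ico_add_one_right_eq_Icc, Finset.sum_Ico_eq_sum_range, show g+1-1 = g by omega]
    apply Finset.sum_congr rfl
    intro i _
    rw [show 1+i = i+1 by omega]
  rw [Finset.sum_neg_distrib, Finset.sum_neg_distrib, hG2]
  linarith [hsum1, hart]

end StmtAux

/-- For each `g`, the coefficient `ã_g(r)` (the coefficient of `(2x)^{2g}` in the solution
`y(x)` of `((y+x)^{r+1}-(y-x)^{r+1})/(2x) = r+1`) is a polynomial in `r`, and its value at
`r = -1` equals `B_{2g}/(2g)!`, the coefficient determined by `x/tanh(x)`: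
`Σ_g ã_g(-1)(2x)^{2g} = x·coth(x) = Σ_g (2^{2g} B_{2g}/(2g)!) x^{2g}`. -/
theorem stmt11 (g : ℕ) :
    ∃ P : Polynomial ℚ,
      (∀ r : ℕ, 2 ≤ r → ∀ y : PowerSeries ℚ, isSol r y →
        Polynomial.eval ((r : ℚ)) P = PowerSeries.coeff (2 * g) y / 4 ^ g) ∧
      Polynomial.eval (-1 : ℚ) P = bernoulli (2 * g) / (Nat.factorial (2 * g) : ℚ) := by
  refine ⟨Polynomial.C ((4:ℚ)^g)⁻¹ * StmtAux.c g, ?_, ?_⟩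
  · intro r hr y hy
    have h := StmtAux.coeff_solution r hr y hy (2*g)
    rw [if_pos (even_two_mul g), show 2*g/2 = g by omega] at h
    rw [Polynomial.eval_mul, Polynomial.eval_C, ← h, div_eq_mul_inv]
    ring
  · rw [Polynomial.eval_mul, Polynomial.eval_C, StmtAux.c_eval_neg g, StmtAux.coeff_W_even g]
    have h4 : ((4:ℚ)^g) ≠ 0 := by positivity
    have hf : (((2*g).factorial : ℕ) : ℚ) ≠ 0 := ne_of_gt (StmtAux.factorial_cast_pos _)
    field_simp
end StmtAux
end

section
/- For every prime p > 5 and every n ≥ 1, s with 0 ≤ 2s ≤ 5n, the rational number 5^{−2s}·(3/5)_n·(4/5)_n·(1/5)_{3n−s} / (s!·(5n−2s)!) is a p-adic integer, where (a)_m = a(a+1)⋯(a+m−1) denotes the ascending Pochhammer symbol. -/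
/-!
Since `p ≠ 5`, the powers of `5` are `p`-adic units and `(r/5)_m = ∏_{i<m} (5i + r) / 5^m`, so
the claim is `v_p(s!) + v_p((5n-2s)!) ≤ v_p(∏_{i<n} (5i+3)) + v_p(∏_{i<n} (5i+4)) +
v_p(∏_{i<3n-s} (5i+1))`. Counting multiples of `q = p^j` for each `j` (Legendre's formula and its
analogue for arithmetic progressions) makes this a sum over `j` of
`⌊s/q⌋ + ⌊(5n-2s)/q⌋ ≤ N₃(n) + N₄(n) + N₁(3n-s)`, where `N_r(m) = #{i < m | q ∣ 5i + r}` equals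
`⌊m/q⌋ + [a_r < m mod q]` for the residue `a_r ≡ -r/5 (mod q)`. Both sides grow by the same amount
when `n` or `3n - s` grows by `q`, so only the residues `b = n mod q` and `f = (3n-s) mod q` matter,
and the inequality becomes `⌊(3b-f)/q⌋ + ⌊(2f-b)/q⌋ ≤ [a₃ < b] + [a₄ < b] + [a₁ < f]`.
-/

open Finset

lemma padicValRat_prod_div_add {p d r : ℕ} [hp : Fact p.Prime] (hpd : ¬ p ∣ d) (hr : 0 < r)
    (m : ℕ) :
    padicValRat p (∏ i ∈ range m, ((r : ℚ) / d + i)) =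
      padicValNat p (∏ i ∈ range m, (d * i + r)) := by
  have hd : (d : ℚ) ≠ 0 := Nat.cast_ne_zero.2 fun h => hpd (h ▸ dvd_zero p)
  have hprod : ∏ i ∈ range m, ((r : ℚ) / d + i) =
      ((∏ i ∈ range m, (d * i + r) : ℕ) : ℚ) / ((d ^ m : ℕ) : ℚ) := by
    calc ∏ i ∈ range m, ((r : ℚ) / d + i) = ∏ i ∈ range m, (((d * i + r : ℕ) : ℚ) / d) :=
          prod_congr rfl fun i _ => by push_cast; field_simp; ring
      _ = _ := by rw [prod_div_distrib, prod_const, card_range]; push_cast; rfl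
  rw [hprod, padicValRat.div, padicValRat.of_nat, padicValRat.of_nat,
    padicValNat.eq_zero_of_not_dvd fun h => hpd (hp.out.dvd_of_dvd_pow h), Nat.cast_zero, sub_zero]
  · exact Nat.cast_ne_zero.2 (prod_ne_zero_iff.2 fun i _ => by omega)
  · exact_mod_cast pow_ne_zero m hd

lemma padicValNat_prod_eq_sum_card {α : Type*} {p b : ℕ} [hp : Fact p.Prime] {S : Finset α}
    {g : α → ℕ} (hg : ∀ x ∈ S, 0 < g x) (hgb : ∀ x ∈ S, g x < p ^ b) :
    padicValNat p (∏ x ∈ S, g x) = ∑ j ∈ Ico 1 b, #{x ∈ S | p ^ j ∣ g x} := by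
  rw [← Nat.factorization_def _ hp.out, Nat.factorization_prod_apply fun x hx => (hg x hx).ne',
    sum_congr rfl fun x hx => Nat.factorization_eq_card_pow_dvd_of_lt hp.out (hg x hx) (hgb x hx)]
  simp only [card_filter]
  exact sum_comm

lemma exists_lt_dvd_mul_add {q d : ℕ} (hq : 0 < q) (hd : d.Coprime q) (r : ℕ) :
    ∃ a < q, q ∣ d * a + r := by
  have : NeZero q := ⟨hq.ne'⟩
  set u := ZMod.unitOfCoprime d hd
  have hu : (d : ZMod q) * ↑u⁻¹ = 1 := by rw [← ZMod.coe_unitOfCoprime d hd, Units.mul_inv]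
  refine ⟨(-(r : ZMod q) * ↑u⁻¹).val, ZMod.val_lt _, ?_⟩
  rw [← ZMod.natCast_eq_zero_iff]
  push_cast [ZMod.natCast_zmod_val]
  linear_combination (-(r : ZMod q)) * hu

lemma card_filter_dvd_mul_add {q d a r : ℕ} (hq : 0 < q) (hd : d.Coprime q)
    (ha : q ∣ d * a + r) (m : ℕ) :
    #{i ∈ range m | q ∣ d * i + r} = m / q + if a % q < m % q then 1 else 0 := by
  rw [← Nat.count_modEq_card _ hq, Nat.count_eq_card_filter_range]
  refine congrArg card (filter_congr fun i _ => ?_)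
  have h0 : d * a + r ≡ 0 [MOD q] := Nat.modEq_zero_iff_dvd.2 ha
  rw [← Nat.modEq_zero_iff_dvd]
  exact ⟨fun h => Nat.ModEq.cancel_left_of_coprime (Nat.coprime_comm.1 hd)
      ((h.trans h0.symm).add_right_cancel' r),
    fun h => ((h.mul_left d).add_right r).trans h0⟩

lemma pos_and_lt_five_of_five_mul_add_eq {q a r c : ℤ} (ha : 0 ≤ a) (haq : a < q) (hr : 0 < r)
    (hr5 : r < 5) (h : 5 * a + r = q * c) : 0 < c ∧ c < 5 := by
  constructor <;> nlinarith

lemma ediv_add_ediv_le_of_dvd_five_mul_add {q b f a₁ a₃ a₄ : ℤ} (hb : 0 ≤ b) (hbq : b < q)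
    (hf : 0 ≤ f) (hfq : f < q) (ha₁ : 0 ≤ a₁) (ha₁q : a₁ < q) (ha₃ : 0 ≤ a₃) (ha₃q : a₃ < q)
    (ha₄ : 0 ≤ a₄) (ha₄q : a₄ < q) (h₁ : q ∣ 5 * a₁ + 1) (h₃ : q ∣ 5 * a₃ + 3)
    (h₄ : q ∣ 5 * a₄ + 4) :
    (3 * b - f) / q + (2 * f - b) / q ≤
      (if a₃ < b then 1 else 0) + (if a₄ < b then 1 else 0) + (if a₁ < f then 1 else 0) := by
  have hq : 0 < q := by omega
  obtain ⟨c₁, hc₁⟩ := h₁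
  obtain ⟨c₃, hc₃⟩ := h₃
  obtain ⟨c₄, hc₄⟩ := h₄
  obtain ⟨hc₁0, hc₁5⟩ := pos_and_lt_five_of_five_mul_add_eq ha₁ ha₁q one_pos (by norm_num) hc₁
  obtain ⟨hc₃0, hc₃5⟩ := pos_and_lt_five_of_five_mul_add_eq ha₃ ha₃q (by norm_num) (by norm_num) hc₃
  obtain ⟨hc₄0, hc₄5⟩ := pos_and_lt_five_of_five_mul_add_eq ha₄ ha₄q (by norm_num) (by norm_num) hc₄
  have hk := Int.mul_ediv_self_le (x := 3 * b - f) hq.ne'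
  have hk' := Int.lt_mul_ediv_self_add (x := 3 * b - f) hq
  have hl := Int.mul_ediv_self_le (x := 2 * f - b) hq.ne'
  have hl' := Int.lt_mul_ediv_self_add (x := 2 * f - b) hq
  generalize (3 * b - f) / q = k at *
  generalize (2 * f - b) / q = l at *
  have hk0 : -1 ≤ k := by nlinarith
  have hk2 : k ≤ 2 := by nlinarith
  have hl0 : -1 ≤ l := by nlinarith
  have hl1 : l ≤ 1 := by nlinarith
  -- `cᵣ q ≡ r (mod 5)` forces `c₃ ≡ 3c₁` and `c₄ ≡ 4c₁ (mod 5)`: four cases for `(c₁, c₃, c₄)`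
  interval_cases c₁ <;> interval_cases c₃ <;> try omega
  all_goals interval_cases c₄ <;> try omega
  all_goals interval_cases k <;> interval_cases l <;> omega

lemma div_add_div_le_card_filter_dvd {q n s : ℕ} (hq : 0 < q) (h5 : Nat.Coprime 5 q)
    (hs : 2 * s ≤ 5 * n) :
    s / q + (5 * n - 2 * s) / q ≤
      #{i ∈ range n | q ∣ 5 * i + 3} + #{i ∈ range n | q ∣ 5 * i + 4} +
        #{i ∈ range (3 * n - s) | q ∣ 5 * i + 1} := by
  obtain ⟨a₁, ha₁, h₁⟩ := exists_lt_dvd_mul_add hq h5 1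
  obtain ⟨a₃, ha₃, h₃⟩ := exists_lt_dvd_mul_add hq h5 3
  obtain ⟨a₄, ha₄, h₄⟩ := exists_lt_dvd_mul_add hq h5 4
  rw [card_filter_dvd_mul_add hq h5 h₁, card_filter_dvd_mul_add hq h5 h₃,
    card_filter_dvd_mul_add hq h5 h₄, Nat.mod_eq_of_lt ha₁, Nat.mod_eq_of_lt ha₃,
    Nat.mod_eq_of_lt ha₄]
  have hs3 : s ≤ 3 * n := by omega
  zify [hs, hs3] at hq ha₁ ha₃ ha₄ h₁ h₃ h₄ ⊢
  set m : ℤ := 3 * n - s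
  have hn := Int.emod_add_mul_ediv (n : ℤ) q
  have hmq := Int.emod_add_mul_ediv m q
  set b := (n : ℤ) % q
  set f := m % q
  have hsq : (s : ℤ) / q = (3 * b - f) / q + (3 * (n / q) - m / q) := by
    rw [← Int.add_mul_ediv_left _ _ hq.ne']
    congr 1
    linarith
  have hMq : (5 * n - 2 * s : ℤ) / q = (2 * f - b) / q + (2 * (m / q) - n / q) := by
    rw [← Int.add_mul_ediv_left _ _ hq.ne']
    congr 1
    linarith
  have key := ediv_add_ediv_le_of_dvd_five_mul_add (Int.emod_nonneg (n : ℤ) hq.ne')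
    (Int.emod_lt_of_pos (n : ℤ) hq) (Int.emod_nonneg m hq.ne') (Int.emod_lt_of_pos m hq)
    (Int.natCast_nonneg a₁) ha₁ (Int.natCast_nonneg a₃) ha₃ (Int.natCast_nonneg a₄) ha₄ h₁ h₃ h₄
  linarith

lemma padicValNat_factorial_add_factorial_le {p n s : ℕ} [hp : Fact p.Prime] (hp5 : p ≠ 5)
    (hs : 2 * s ≤ 5 * n) :
    padicValNat p s.factorial + padicValNat p (5 * n - 2 * s).factorial ≤
      padicValNat p (∏ i ∈ range n, (5 * i + 3)) + padicValNat p (∏ i ∈ range n, (5 * i + 4)) +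
        padicValNat p (∏ i ∈ range (3 * n - s), (5 * i + 1)) := by
  set B := 15 * n + 5
  have hlog {x : ℕ} (hx : x < B) : Nat.log p x < B := (Nat.log_le_self _ _).trans_lt hx
  have hprod (r m : ℕ) (hr : 0 < r) (hm : 5 * m + r ≤ B) :
      padicValNat p (∏ i ∈ range m, (5 * i + r)) =
        ∑ j ∈ Ico 1 B, #{i ∈ range m | p ^ j ∣ 5 * i + r} :=
    padicValNat_prod_eq_sum_card (fun i _ => by omega) fun i hi =>
      (by rw [mem_range] at hi; omega : 5 * i + r < B).trans (Nat.lt_pow_self hp.out.one_lt)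
  have h5 (j : ℕ) : Nat.Coprime 5 (p ^ j) :=
    Nat.Coprime.pow_right j ((Nat.coprime_primes (by norm_num) hp.out).2 hp5.symm)
  rw [padicValNat_factorial (hlog (by omega)), padicValNat_factorial (hlog (by omega)),
    hprod 3 n (by norm_num) (by omega), hprod 4 n (by norm_num) (by omega),
    hprod 1 (3 * n - s) (by norm_num) (by omega), ← sum_add_distrib, ← sum_add_distrib,
    ← sum_add_distrib]
  exact sum_le_sum fun j _ => div_add_div_le_card_filter_dvd (pow_pos hp.out.pos j) (h5 j) hs

theorem stmt16_general (p : ℕ) (hp : p.Prime) (hp5 : 5 < p) (n s : ℕ)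
    (hs : 2 * s ≤ 5 * n) :
    0 ≤ padicValRat p
      (((5 : ℚ) ^ (2 * s))⁻¹
        * (∏ i ∈ Finset.range n, ((3 : ℚ) / 5 + (i : ℚ)))
        * (∏ i ∈ Finset.range n, ((4 : ℚ) / 5 + (i : ℚ)))
        * (∏ i ∈ Finset.range (3 * n - s), ((1 : ℚ) / 5 + (i : ℚ)))
        / ((s.factorial : ℚ) * ((5 * n - 2 * s).factorial : ℚ))) := by
  have : Fact p.Prime := ⟨hp⟩
  have hp_dvd : ¬ p ∣ 5 := fun h => by have := Nat.le_of_dvd (by norm_num) h; omega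
  have h₃ := padicValRat_prod_div_add (r := 3) hp_dvd (by norm_num) n
  have h₄ := padicValRat_prod_div_add (r := 4) hp_dvd (by norm_num) n
  have h₁ := padicValRat_prod_div_add (r := 1) hp_dvd (by norm_num) (3 * n - s)
  simp only [Nat.cast_ofNat, Nat.cast_one] at h₃ h₄ h₁
  have h₅ : padicValRat p 5 = 0 := by
    rw [← Nat.cast_ofNat, padicValRat.of_nat, padicValNat.eq_zero_of_not_dvd hp_dvd, Nat.cast_zero]
  rw [padicValRat.div (by positivity) (by positivity), padicValRat.mul (by positivity)
    (by positivity), padicValRat.mul (by positivity) (by positivity),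
    padicValRat.mul (by positivity) (by positivity), padicValRat.inv, padicValRat.pow, h₅,
    h₃, h₄, h₁, padicValRat.mul (by positivity) (by positivity), padicValRat.of_nat,
    padicValRat.of_nat, mul_zero, neg_zero, zero_add, sub_nonneg]
  exact_mod_cast padicValNat_factorial_add_factorial_le (by omega) hs

/-- For every prime `p > 5` and every `n ≥ 1`, `0 ≤ 2s ≤ 5n`, the rational number
`5^{-2s}·(3/5)_n·(4/5)_n·(1/5)_{3n-s} / (s!·(5n-2s)!)` is a `p`-adic integer, where
`(a)_m = a(a+1)⋯(a+m-1)` is the ascending Pochhammer symbol. -/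
theorem stmt16 (p : ℕ) (hp : p.Prime) (hp5 : 5 < p) (n s : ℕ)
    (hn : 1 ≤ n) (hs : 2 * s ≤ 5 * n) :
    0 ≤ padicValRat p
      (((5 : ℚ) ^ (2 * s))⁻¹
        * (∏ i ∈ Finset.range n, ((3 : ℚ) / 5 + (i : ℚ)))
        * (∏ i ∈ Finset.range n, ((4 : ℚ) / 5 + (i : ℚ)))
        * (∏ i ∈ Finset.range (3 * n - s), ((1 : ℚ) / 5 + (i : ℚ)))
        / ((s.factorial : ℚ) * ((5 * n - 2 * s).factorial : ℚ))) :=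
  stmt16_general p hp hp5 n s hs
end
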